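/- arXiv:2406.17424 — 4 statements merged into one kernel-verified Lean document; each statement's English description precedes it below -/
import Mathlib

section
/- Let G be a graph and let X be a bramble of G of maximum order tw(G)+1, and let Q be a minimum-size hitting set of X. Then Q is well-linked: for any two disjoint subsets A, B of Q with |A| = |B|, there exist |A| pairwise vertex-disjoint paths in G each connecting a vertex of A to a vertex of B. -/
open SimpleGraph

namespace MengerAux

variable {V : Type*}

/-- `S` separates `A` from `B` in `G`. -/
def Sep (G : SimpleGraph V) (A B S : Finset V) : Prop :=
  ∀ ⦃a⦄, a ∈ A → ∀ ⦃b⦄, b ∈ B → ∀ w : G.Walk a b, ∃ s ∈ S, s ∈ w.support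

/-- There are `k` pairwise disjoint `A`–`B` paths in `G`. -/
def Linkage (G : SimpleGraph V) (A B : Finset V) (k : ℕ) : Prop :=
  ∃ (a b : Fin k → V) (p : ∀ i, G.Walk (a i) (b i)),
    (∀ i, a i ∈ A) ∧ (∀ i, b i ∈ B) ∧ (∀ i, (p i).IsPath) ∧
    ∀ i j, i ≠ j → List.Disjoint (p i).support (p j).support

/-- A prefix of a walk up to the first vertex of `X`. -/
lemma exists_prefix {G : SimpleGraph V} {a b : V} (w : G.Walk a b) (X : Finset V)
    (h : ∃ v ∈ X, v ∈ w.support) :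
    ∃ c ∈ X, ∃ w₁ : G.Walk a c, (∀ z ∈ w₁.support, z ∈ w.support) ∧
      (∀ z ∈ w₁.support, z ∈ X → z = c) := by
  classical
  induction w with
  | nil =>
    obtain ⟨v, hvX, hvs⟩ := h
    simp only [Walk.support_nil, List.mem_singleton] at hvs
    subst hvs
    exact ⟨v, hvX, Walk.nil, by simp, by simp⟩
  | @cons u c b hadj rest ih =>
    by_cases hu : u ∈ X
    · exact ⟨u, hu, Walk.nil, by simp, by simp⟩
    · obtain ⟨v, hvX, hvs⟩ := h
      have hvs' : v ∈ rest.support := by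
        simp only [Walk.support_cons, List.mem_cons] at hvs
        rcases hvs with rfl | h'
        · exact absurd hvX hu
        · exact h'
      obtain ⟨c', hc'X, w₁, hsub, hmeet⟩ := ih ⟨v, hvX, hvs'⟩
      refine ⟨c', hc'X, Walk.cons hadj w₁, ?_, ?_⟩
      · intro z hz
        simp only [Walk.support_cons, List.mem_cons] at hz ⊢
        rcases hz with rfl | hz
        · exact Or.inl rfl
        · exact Or.inr (hsub z hz)
      · intro z hz hzX
        simp only [Walk.support_cons, List.mem_cons] at hz
        rcases hz with rfl | hz
        · exact absurd hzX hu
        · exact hmeet z hz hzX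

lemma end_not_mem_takeUntil [DecidableEq V] {G : SimpleGraph V} {u v : V} {p : G.Walk u v}
    (hp : p.IsPath) {z : V} (hz : z ∈ p.support) (hne : z ≠ v) :
    v ∉ (p.takeUntil z hz).support := by
  intro hmem
  have hspec := p.take_spec hz
  have hnodup : p.support.Nodup := hp.support_nodup
  rw [← hspec, Walk.support_append] at hnodup
  have hdrop : v ∈ (p.dropUntil z hz).support.tail := by
    have h1 : v ∈ (p.dropUntil z hz).support := Walk.end_mem_support _
    have h2 := (p.dropUntil z hz).support_eq_cons
    rw [h2, List.mem_cons] at h1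
    rcases h1 with h1 | h1
    · exact absurd h1.symm hne
    · exact h1
  exact (List.disjoint_of_nodup_append hnodup) hmem hdrop

lemma start_not_mem_dropUntil [DecidableEq V] {G : SimpleGraph V} {u v : V} {p : G.Walk u v}
    (hp : p.IsPath) {z : V} (hz : z ∈ p.support) (hne : z ≠ u) :
    u ∉ (p.dropUntil z hz).support := by
  intro hmem
  have hspec := p.take_spec hz
  have hnodup : p.support.Nodup := hp.support_nodup
  rw [← hspec, Walk.support_append] at hnodup
  have hdrop : u ∈ (p.dropUntil z hz).support.tail := by
    have h2 := (p.dropUntil z hz).support_eq_cons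
    rw [h2, List.mem_cons] at hmem
    rcases hmem with h1 | h1
    · exact absurd h1.symm hne
    · exact h1
  exact (List.disjoint_of_nodup_append hnodup) (Walk.start_mem_support _) hdrop

/-- Mapping a walk along a vertex map that is a quasi-homomorphism. -/
lemma walk_map_quasi {G G' : SimpleGraph V} (f : V → V)
    (hf : ∀ u v, G.Adj u v → f u = f v ∨ G'.Adj (f u) (f v)) {a b : V} (w : G.Walk a b) :
    ∃ w' : G'.Walk (f a) (f b), ∀ z ∈ w'.support, ∃ u ∈ w.support, f u = z := by
  induction w with
  | nil => exact ⟨Walk.nil, by simp⟩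
  | @cons u c b hadj rest ih =>
    obtain ⟨w', hw'⟩ := ih
    rcases hf _ _ hadj with he | he
    · refine ⟨w'.copy he.symm rfl, ?_⟩
      intro z hz
      rw [Walk.support_copy] at hz
      obtain ⟨u', hu', rfl⟩ := hw' z hz
      exact ⟨u', by simp [hu'], rfl⟩
    · refine ⟨Walk.cons he w', ?_⟩
      intro z hz
      simp only [Walk.support_cons, List.mem_cons] at hz
      rcases hz with rfl | hz
      · exact ⟨u, by simp, rfl⟩
      · obtain ⟨u', hu', rfl⟩ := hw' z hz
        exact ⟨u', by simp [hu'], rfl⟩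

section Contract

variable [DecidableEq V] {G : SimpleGraph V} {x y : V}

/-- Contract `y` into `x` (leaving `y` isolated). -/
def contract (G : SimpleGraph V) (x y : V) : SimpleGraph V where
  Adj u v := u ≠ v ∧ u ≠ y ∧ v ≠ y ∧
    (G.Adj u v ∨ (u = x ∧ G.Adj y v) ∨ (v = x ∧ G.Adj u y))
  symm := ⟨by
    rintro u v ⟨h1, h2, h3, h4⟩
    refine ⟨h1.symm, h3, h2, ?_⟩
    rcases h4 with h | ⟨rfl, h⟩ | ⟨rfl, h⟩
    · exact Or.inl h.symm
    · exact Or.inr (Or.inr ⟨rfl, h.symm⟩)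
    · exact Or.inr (Or.inl ⟨rfl, h.symm⟩)⟩
  loopless := ⟨fun v h => h.1 rfl⟩

/-- The vertex map of the contraction. -/
def cmap (x y : V) : V → V := fun v => if v = y then x else v

lemma cmap_ne_y (hne : x ≠ y) (v : V) : cmap x y v ≠ y := by
  unfold cmap; split <;> simp_all

lemma cmap_eq_iff (v u : V) : cmap x y v = u ↔ (v = u ∧ v ≠ y) ∨ (v = y ∧ u = x) := by
  unfold cmap; split <;> (try tauto) <;> simp_all

omit [DecidableEq V] in
lemma contract_not_adj_y (z : V) : ¬ (contract G x y).Adj y z := fun h => h.2.1 rfl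

lemma contract_quasi (hxy : G.Adj x y) :
    ∀ u v, G.Adj u v → cmap x y u = cmap x y v ∨ (contract G x y).Adj (cmap x y u) (cmap x y v) := by
  have hne := hxy.ne
  intro u v h
  by_cases hu : u = y <;> by_cases hv : v = y
  · subst hu; subst hv; exact absurd h (G.irrefl)
  · subst hu
    simp only [cmap, if_pos rfl, if_neg hv]
    by_cases hvx : v = x
    · exact Or.inl hvx.symm
    · exact Or.inr ⟨fun hh => hvx hh.symm, hne, hv, Or.inr (Or.inl ⟨rfl, h⟩)⟩
  · subst hv
    simp only [cmap, if_pos rfl, if_neg hu]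
    by_cases hux : u = x
    · exact Or.inl hux
    · exact Or.inr ⟨hux, hu, hne, Or.inr (Or.inr ⟨rfl, h⟩)⟩
  · simp only [cmap, if_neg hu, if_neg hv]
    exact Or.inr ⟨h.ne, hu, hv, Or.inl h⟩

/-- Contraction strictly decreases the number of edges. -/
lemma contract_edges_lt [Fintype V] (hxy : G.Adj x y) :
    ((contract G x y).edgeSet).ncard < (G.edgeSet).ncard := by
  classical
  have hne := hxy.ne
  set m : Sym2 V → Sym2 V := fun s =>
    if s ∈ G.edgeSet then s else Sym2.map (fun v => if v = x then y else v) s with hm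
  have hform : ∀ s ∈ (contract G x y).edgeSet, s ∉ G.edgeSet →
      ∃ c, s = s(x, c) ∧ c ≠ x ∧ c ≠ y ∧ G.Adj y c := by
    intro s hs hns
    induction s with
    | _ u v =>
      rw [mem_edgeSet] at hs
      obtain ⟨h1, h2, h3, h4⟩ := hs
      rw [mem_edgeSet] at hns
      rcases h4 with h | ⟨rfl, h⟩ | ⟨rfl, h⟩
      · exact absurd h hns
      · exact ⟨v, rfl, fun hh => h1 hh.symm, h3, h⟩
      · exact ⟨u, Sym2.eq_swap, fun hh => h1 hh, h2, h.symm⟩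
  have hy_not : ∀ s ∈ (contract G x y).edgeSet, y ∉ s := by
    intro s hs
    induction s with
    | _ u v =>
      rw [mem_edgeSet] at hs
      intro hmem
      rw [Sym2.mem_iff] at hmem
      rcases hmem with rfl | rfl
      · exact hs.2.1 rfl
      · exact hs.2.2.1 rfl
  have hmap_pair : ∀ c : V, c ≠ x →
      Sym2.map (fun v => if v = x then y else v) s(x, c) = s(y, c) := by
    intro c hcx
    simp [Sym2.map_pair_eq, if_neg hcx]
  have hmaps : ∀ s ∈ (contract G x y).edgeSet, m s ∈ G.edgeSet \ {s(x, y)} := by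
    intro s hs
    by_cases hsG : s ∈ G.edgeSet
    · refine ⟨by simp [hm, hsG], ?_⟩
      simp only [Set.mem_singleton_iff]
      intro heq
      rw [hm] at heq; simp only [if_pos hsG] at heq
      exact hy_not s hs (heq ▸ Sym2.mem_mk_right x y)
    · obtain ⟨c, rfl, hcx, hcy, hadj⟩ := hform s hs hsG
      have : m s(x, c) = s(y, c) := by
        simp [hm, if_neg hsG, Sym2.map_pair_eq, if_neg hcx]
      rw [this]
      refine ⟨by rw [mem_edgeSet]; exact hadj, ?_⟩
      simp only [Set.mem_singleton_iff]
      intro heq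
      rw [Sym2.eq_iff] at heq
      rcases heq with ⟨h1, h2⟩ | ⟨h1, h2⟩
      · exact hcy h2
      · exact hcx h2
  have hinj : Set.InjOn m (contract G x y).edgeSet := by
    intro s hs t ht heq
    simp only [hm] at heq
    by_cases hsG : s ∈ G.edgeSet <;> by_cases htG : t ∈ G.edgeSet
    · rwa [if_pos hsG, if_pos htG] at heq
    · exfalso
      obtain ⟨c, rfl, hcx, hcy, _⟩ := hform t ht htG
      rw [if_pos hsG, if_neg htG, hmap_pair c hcx] at heq
      exact hy_not s hs (heq ▸ Sym2.mem_mk_left y c)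
    · exfalso
      obtain ⟨c, rfl, hcx, hcy, _⟩ := hform s hs hsG
      rw [if_pos htG, if_neg hsG, hmap_pair c hcx] at heq
      exact hy_not t ht (heq ▸ Sym2.mem_mk_left y c)
    · obtain ⟨c, rfl, hcx, hcy, _⟩ := hform s hs hsG
      obtain ⟨c', rfl, hcx', hcy', _⟩ := hform t ht htG
      rw [if_neg hsG, if_neg htG, hmap_pair c hcx, hmap_pair c' hcx'] at heq
      rw [Sym2.eq_iff] at heq
      rcases heq with ⟨_, h2⟩ | ⟨h1, h2⟩
      · rw [h2]
      · exact absurd h1.symm hcy'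
  have hfin : (G.edgeSet).Finite := Set.toFinite _
  calc ((contract G x y).edgeSet).ncard = (m '' (contract G x y).edgeSet).ncard :=
        (Set.ncard_image_of_injOn hinj).symm
    _ ≤ (G.edgeSet \ {s(x, y)}).ncard := by
        apply Set.ncard_le_ncard
        · rintro t ⟨s, hs, rfl⟩; exact hmaps s hs
        · exact hfin.diff
    _ < (G.edgeSet).ncard := by
        apply Set.ncard_diff_singleton_lt_of_mem _ hfin
        rw [mem_edgeSet]; exact hxy

lemma cmap_y : cmap x y y = x := if_pos rfl

lemma cmap_of_ne {v : V} (h : v ≠ y) : cmap x y v = v := if_neg h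

omit [DecidableEq V] in
lemma contract_walk_y_not_mem {u v : V} (w' : (contract G x y).Walk u v) (hu : u ≠ y) :
    y ∉ w'.support := by
  induction w' with
  | nil => simpa using fun h => hu h.symm
  | @cons u c v hadj rest ih =>
    have hc : c ≠ y := fun h => hadj.2.2.1 h
    simp only [Walk.support_cons, List.mem_cons]
    rintro (h | h)
    · exact hu h.symm
    · exact ih hc h

lemma lift_walk (hxy : G.Adj x y) :
    ∀ {u v : V} (w' : (contract G x y).Walk u v), u ≠ y →
    ∀ u₀ v₀, cmap x y u₀ = u → cmap x y v₀ = v →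
    ∃ w : G.Walk u₀ v₀, ∀ z ∈ w.support, cmap x y z ∈ w'.support := by
  have hne : x ≠ y := hxy.ne
  intro u v w'
  induction w' with
  | @nil u =>
    intro hu u₀ v₀ h₀ h₁
    by_cases he : u₀ = v₀
    · subst he
      exact ⟨Walk.nil, by simpa using h₀⟩
    · rcases (cmap_eq_iff _ _).1 h₀ with ⟨h2, hu₀y⟩ | ⟨h2, h3⟩ <;>
        rcases (cmap_eq_iff _ _).1 h₁ with ⟨h4, hv₀y⟩ | ⟨h4, h5⟩
      · exact absurd (h2.trans h4.symm) he
      · refine ⟨(Walk.cons hxy Walk.nil).copy (h2.trans h5).symm h4.symm, ?_⟩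
        intro z hz
        rw [Walk.support_copy] at hz
        simp only [Walk.support_cons, Walk.support_nil, List.mem_cons,
          List.mem_singleton, List.not_mem_nil, or_false] at hz
        simp only [Walk.support_nil, List.mem_singleton]
        rcases hz with h6 | h6 <;> rw [h6]
        · rw [cmap_of_ne hne]; exact h5.symm
        · rw [cmap_y]; exact h5.symm
      · refine ⟨(Walk.cons hxy.symm Walk.nil).copy h2.symm (h4.trans h3).symm, ?_⟩
        intro z hz
        rw [Walk.support_copy] at hz
        simp only [Walk.support_cons, Walk.support_nil, List.mem_cons,
          List.mem_singleton, List.not_mem_nil, or_false] at hz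
        simp only [Walk.support_nil, List.mem_singleton]
        rcases hz with h6 | h6 <;> rw [h6]
        · rw [cmap_y]; exact h3.symm
        · rw [cmap_of_ne hne]; exact h3.symm
      · exact absurd (h2.trans h4.symm) he
  | @cons u c v hadj rest ih =>
    intro hu u₀ v₀ h₀ h₁
    have hne_uc : u ≠ c := hadj.1
    have hu' : u ≠ y := hadj.2.1
    have hc' : c ≠ y := hadj.2.2.1
    have hdisj := hadj.2.2.2
    have hc : cmap x y c = c := cmap_of_ne hc'
    obtain ⟨W, hW⟩ := ih hc' c v₀ hc h₁
    have hcmem : c ∈ rest.support := rest.start_mem_support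
    rcases (cmap_eq_iff _ _).1 h₀ with ⟨hA, hu₀y⟩ | ⟨hA, hB⟩
    · -- u₀ = u
      rcases hdisj with h | ⟨hux, h⟩ | ⟨hcx, h⟩
      · refine ⟨Walk.cons (show G.Adj u₀ c by rw [hA]; exact h) W, ?_⟩
        intro z hz
        simp only [Walk.support_cons, List.mem_cons] at hz ⊢
        rcases hz with h6 | hz
        · exact Or.inl (by rw [h6, cmap_of_ne hu₀y]; exact hA)
        · exact Or.inr (hW z hz)
      · refine ⟨Walk.cons (show G.Adj u₀ y by rw [hA, hux]; exact hxy)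
          (Walk.cons h W), ?_⟩
        intro z hz
        simp only [Walk.support_cons, List.mem_cons] at hz ⊢
        rcases hz with h6 | h6 | hz
        · exact Or.inl (by rw [h6, cmap_of_ne hu₀y]; exact hA)
        · exact Or.inl (by rw [h6, cmap_y]; exact hux.symm)
        · exact Or.inr (hW z hz)
      · refine ⟨Walk.cons (show G.Adj u₀ y by rw [hA]; exact h)
          (Walk.cons (show G.Adj y c by rw [hcx]; exact hxy.symm) W), ?_⟩
        intro z hz
        simp only [Walk.support_cons, List.mem_cons] at hz ⊢
        rcases hz with h6 | h6 | hz
        · exact Or.inl (by rw [h6, cmap_of_ne hu₀y]; exact hA)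
        · exact Or.inr (by rw [h6, cmap_y]; exact @Eq.subst V (· ∈ rest.support) c x hcx hcmem)
        · exact Or.inr (hW z hz)
    · -- u₀ = y, u = x
      rcases hdisj with h | ⟨hux, h⟩ | ⟨hcx, h⟩
      · refine ⟨Walk.cons (show G.Adj u₀ x by rw [hA]; exact hxy.symm)
          (Walk.cons (show G.Adj x c by rw [← hB]; exact h) W), ?_⟩
        intro z hz
        simp only [Walk.support_cons, List.mem_cons] at hz ⊢
        rcases hz with h6 | h6 | hz
        · exact Or.inl (by rw [h6, hA, cmap_y]; exact hB.symm)
        · exact Or.inl (by rw [h6, cmap_of_ne hne]; exact hB.symm)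
        · exact Or.inr (hW z hz)
      · refine ⟨Walk.cons (show G.Adj u₀ c by rw [hA]; exact h) W, ?_⟩
        intro z hz
        simp only [Walk.support_cons, List.mem_cons] at hz ⊢
        rcases hz with h6 | hz
        · exact Or.inl (by rw [h6, hA, cmap_y]; exact hB.symm)
        · exact Or.inr (hW z hz)
      · exact absurd (hB.trans hcx.symm) hne_uc

lemma sep_contract {A B Y' : Finset V} (hxy : G.Adj x y)
    (hsep : Sep (contract G x y) (A.image (cmap x y)) (B.image (cmap x y)) Y') :
    Sep G A B (if x ∈ Y' then insert y Y' else Y') := by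
  intro a ha b hb w
  obtain ⟨w', hw'⟩ := walk_map_quasi (cmap x y) (contract_quasi hxy) w
  obtain ⟨s, hsY, hss⟩ := hsep (Finset.mem_image_of_mem _ ha) (Finset.mem_image_of_mem _ hb) w'
  obtain ⟨u, hus, hfu⟩ := hw' s hss
  by_cases huy : u = y
  · have hsx : s = x := by rw [← hfu, huy, cmap_y]
    rw [if_pos (hsx ▸ hsY)]
    exact ⟨y, Finset.mem_insert_self _ _, huy ▸ hus⟩
  · have hsu : s = u := by rw [← hfu, cmap_of_ne huy]
    split
    · exact ⟨s, Finset.mem_insert_of_mem hsY, hsu ▸ hus⟩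
    · exact ⟨s, hsY, hsu ▸ hus⟩

end Contract

section Menger

variable [Fintype V] [DecidableEq V]

theorem menger_aux : ∀ (n : ℕ) (G : SimpleGraph V), G.edgeSet.ncard = n →
    ∀ (A B : Finset V) (k : ℕ), (∀ S : Finset V, Sep G A B S → k ≤ S.card) →
    Linkage G A B k := by
  intro n
  induction n using Nat.strong_induction_on with
  | _ n ih =>
    intro G hn A B k hsep
    by_cases hE : G.edgeSet = ∅
    · -- base case: no edges
      have hAB : Sep G A B (A ∩ B) := by
        intro a ha b hb w
        cases w with
        | nil => exact ⟨a, Finset.mem_inter.2 ⟨ha, hb⟩, by simp⟩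
        | cons h _ => exact absurd (G.mem_edgeSet.2 h) (by simp [hE])
      obtain ⟨T, hT, hTcard⟩ := Finset.exists_subset_card_eq (hsep _ hAB)
      have e : Fin k ≃ {v // v ∈ T} := (T.equivFin.trans (finCongr hTcard)).symm
      refine ⟨fun i => (e i).1, fun i => (e i).1, fun i => Walk.nil, ?_, ?_, ?_, ?_⟩
      · exact fun i => Finset.mem_inter.1 (hT (e i).2) |>.1
      · exact fun i => Finset.mem_inter.1 (hT (e i).2) |>.2
      · exact fun i => Walk.IsPath.nil
      · intro i j hij z hz1 hz2
        simp only [Walk.support_nil, List.mem_singleton] at hz1 hz2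
        exact hij (e.injective (Subtype.ext ((hz1 ▸ hz2 : (e i).1 = (e j).1))))
    · obtain ⟨ed, hed⟩ := Set.nonempty_iff_ne_empty.2 hE
      induction ed using Sym2.ind with
      | _ x y =>
        have hxy : G.Adj x y := G.mem_edgeSet.1 hed
        have hxyne : x ≠ y := hxy.ne
        by_cases hcase : ∀ Y' : Finset V,
            Sep (contract G x y) (A.image (cmap x y)) (B.image (cmap x y)) Y' → k ≤ Y'.card
        · -- case (i): contract and lift
          obtain ⟨a', b', p', ha', hb', hp', hdisj'⟩ :=
            ih _ (by rw [← hn]; exact contract_edges_lt hxy) (contract G x y) rfl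
              (A.image (cmap x y)) (B.image (cmap x y)) k hcase
          choose a haA hfa using fun i => Finset.mem_image.1 (ha' i)
          choose b hbB hfb using fun i => Finset.mem_image.1 (hb' i)
          choose w hw using fun i =>
            lift_walk hxy (p' i) ((hfa i) ▸ cmap_ne_y hxyne (a i)) (a i) (b i) (hfa i) (hfb i)
          refine ⟨a, b, fun i => (w i).bypass, haA, hbB, fun i => Walk.bypass_isPath _, ?_⟩
          intro i j hij z hz1 hz2
          exact hdisj' i j hij
            (hw i z ((w i).support_bypass_subset hz1))
            (hw j z ((w j).support_bypass_subset hz2))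
        · -- case (ii)
          push_neg at hcase
          obtain ⟨Y', hY'sep, hY'lt⟩ := hcase
          have hxY' : x ∈ Y' := by
            by_contra hxY
            have h1 := sep_contract hxy hY'sep
            rw [if_neg hxY] at h1
            exact absurd (hsep _ h1) (not_le.2 hY'lt)
          have hsepX : Sep G A B (insert y Y') := by
            have h1 := sep_contract hxy hY'sep
            rwa [if_pos hxY'] at h1
          set X := insert y Y' with hXdef
          have hXcard : X.card = k := by
            have h1 : X.card ≤ Y'.card + 1 := Finset.card_insert_le _ _
            have h2 : k ≤ X.card := hsep _ hsepX
            omega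
          have hxX : x ∈ X := Finset.mem_insert_of_mem hxY'
          have hyX : y ∈ X := Finset.mem_insert_self _ _
          set Gd := G.deleteEdges {s(x, y)} with hGddef
          have hGdedge : Gd.edgeSet = G.edgeSet \ {s(x, y)} := edgeSet_deleteEdges _
          have hGdlt : Gd.edgeSet.ncard < n := by
            rw [← hn, hGdedge]
            exact Set.ncard_diff_singleton_lt_of_mem hed (Set.toFinite _)
          have hGdle : ∀ {u v : V} (w : Gd.Walk u v), ∀ e ∈ w.edges, e ∈ G.edgeSet := by
            intro u v w e he
            have h1 := w.edges_subset_edgeSet he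
            rw [hGdedge] at h1
            exact h1.1
          -- a G-walk hitting X only at the endpoint of a prefix transfers to Gd
          have hprefix : ∀ {av bv : V}, av ∈ A → ∀ (w : G.Walk av bv), bv ∈ B →
              ∃ cv ∈ X, ∃ w₁ : Gd.Walk av cv, (∀ z ∈ w₁.support, z ∈ w.support) ∧
                (∀ z ∈ w₁.support, z ∈ X → z = cv) := by
            intro av bv ha w hb
            obtain ⟨cv, hcX, w₁, hsub, hmeet⟩ := exists_prefix w X (by
              obtain ⟨s, hs1, hs2⟩ := hsepX ha hb w
              exact ⟨s, hs1, hs2⟩)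
            have hcond : ∀ e ∈ w₁.edges, e ∈ Gd.edgeSet := by
              intro e he
              rw [hGdedge]
              refine ⟨w₁.edges_subset_edgeSet he, ?_⟩
              simp only [Set.mem_singleton_iff]
              rintro rfl
              have hx1 : x ∈ w₁.support := w₁.fst_mem_support_of_mem_edges he
              have hy1 : y ∈ w₁.support := w₁.snd_mem_support_of_mem_edges he
              exact hxyne ((hmeet x hx1 hxX).trans (hmeet y hy1 hyX).symm)
            refine ⟨cv, hcX, w₁.transfer Gd hcond, ?_, ?_⟩
            · intro z hz; rw [Walk.support_transfer] at hz; exact hsub z hz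
            · intro z hz; rw [Walk.support_transfer] at hz; exact hmeet z hz
          have hsepAX : ∀ R : Finset V, Sep Gd A X R → k ≤ R.card := by
            intro R hR
            refine hsep R ?_
            intro av ha bv hb w
            obtain ⟨cv, hcX, w₁, hsub, hmeet⟩ := hprefix ha w hb
            obtain ⟨s, hsR, hss⟩ := hR ha hcX w₁
            exact ⟨s, hsR, hsub s hss⟩
          have hsepXB : ∀ R : Finset V, Sep Gd X B R → k ≤ R.card := by
            intro R hR
            refine hsep R ?_
            intro av ha bv hb w
            -- use the reversed walk
            have hrev : Sep G B A (insert y Y') := by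
              intro b1 hb1 a1 ha1 w1
              obtain ⟨s, hs1, hs2⟩ := hsepX ha1 hb1 w1.reverse
              rw [Walk.support_reverse, List.mem_reverse] at hs2
              exact ⟨s, hs1, hs2⟩
            obtain ⟨cv, hcX, w₁, hsub, hmeet⟩ := exists_prefix w.reverse X (by
              obtain ⟨s, hs1, hs2⟩ := hrev hb ha w.reverse
              exact ⟨s, hs1, hs2⟩)
            have hcond : ∀ e ∈ w₁.edges, e ∈ Gd.edgeSet := by
              intro e he
              rw [hGdedge]
              refine ⟨w₁.edges_subset_edgeSet he, ?_⟩
              simp only [Set.mem_singleton_iff]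
              rintro rfl
              have hx1 : x ∈ w₁.support := w₁.fst_mem_support_of_mem_edges he
              have hy1 : y ∈ w₁.support := w₁.snd_mem_support_of_mem_edges he
              exact hxyne ((hmeet x hx1 hxX).trans (hmeet y hy1 hyX).symm)
            obtain ⟨s, hsR, hss⟩ := hR hcX hb (w₁.transfer Gd hcond).reverse
            rw [Walk.support_reverse, List.mem_reverse, Walk.support_transfer] at hss
            have := hsub s hss
            rw [Walk.support_reverse, List.mem_reverse] at this
            exact ⟨s, hsR, this⟩
          obtain ⟨a, c, p, haA, hcX1, hppath, hpd⟩ := ih _ hGdlt Gd rfl A X k hsepAX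
          obtain ⟨d, b, q, hdX1, hbB, hqpath, hqd⟩ := ih _ hGdlt Gd rfl X B k hsepXB
          -- truncate p i at its first X vertex
          have htrunc : ∀ i, ∃ cv, cv ∈ X ∧ ∃ pi : Gd.Walk (a i) cv, pi.IsPath ∧
              (∀ z ∈ pi.support, z ∈ (p i).support) ∧ (∀ z ∈ pi.support, z ∈ X → z = cv) := by
            intro i
            obtain ⟨cv, hcX, w₁, hsub, hmeet⟩ := exists_prefix (p i) X
              ⟨c i, hcX1 i, (p i).end_mem_support⟩
            exact ⟨cv, hcX, w₁.bypass, Walk.bypass_isPath _,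
              fun z hz => hsub z (w₁.support_bypass_subset hz),
              fun z hz => hmeet z (w₁.support_bypass_subset hz)⟩
          choose ct hctX pt hptpath hptsub hptmeet using htrunc
          have htrunc2 : ∀ i, ∃ dv, dv ∈ X ∧ ∃ qi : Gd.Walk dv (b i), qi.IsPath ∧
              (∀ z ∈ qi.support, z ∈ (q i).support) ∧ (∀ z ∈ qi.support, z ∈ X → z = dv) := by
            intro i
            obtain ⟨dv, hdX, w₁, hsub, hmeet⟩ := exists_prefix (q i).reverse X
              ⟨d i, hdX1 i, by
                rw [Walk.support_reverse, List.mem_reverse]; exact (q i).start_mem_support⟩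
            refine ⟨dv, hdX, w₁.bypass.reverse, (Walk.bypass_isPath _).reverse, ?_, ?_⟩
            · intro z hz
              rw [Walk.support_reverse, List.mem_reverse] at hz
              have h1 := hsub z (w₁.support_bypass_subset hz)
              rw [Walk.support_reverse, List.mem_reverse] at h1
              exact h1
            · intro z hz
              rw [Walk.support_reverse, List.mem_reverse] at hz
              exact hmeet z (w₁.support_bypass_subset hz)
          choose dt hdtX qt hqtpath hqtsub hqtmeet using htrunc2
          -- the endpoints are all distinct, hence enumerate X
          have hctinj : Function.Injective ct := by
            intro i j hij
            by_contra hne'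
            exact (hpd i j hne')
              (hptsub i _ ((pt i).end_mem_support))
              (hptsub j _ (@Eq.subst V (· ∈ (pt j).support) _ _ hij.symm ((pt j).end_mem_support)))
          have hdtinj : Function.Injective dt := by
            intro i j hij
            by_contra hne'
            exact (hqd i j hne')
              (hqtsub i _ ((qt i).start_mem_support))
              (hqtsub j _ (@Eq.subst V (· ∈ (qt j).support) _ _ hij.symm ((qt j).start_mem_support)))
          have hcard : Fintype.card (Fin k) = Fintype.card {v // v ∈ X} := by
            rw [Fintype.card_fin, Fintype.card_coe, hXcard]
          have hbij2 : Function.Bijective (fun i => (⟨dt i, hdtX i⟩ : {v // v ∈ X})) :=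
            (Fintype.bijective_iff_injective_and_card _).2
              ⟨fun i j hij => hdtinj (congrArg Subtype.val hij), hcard⟩
          set e2 := Equiv.ofBijective _ hbij2 with he2
          set σ : Fin k → Fin k := fun i => e2.symm ⟨ct i, hctX i⟩ with hσdef
          have hσ : ∀ i, dt (σ i) = ct i := by
            intro i
            have h1 := e2.apply_symm_apply ⟨ct i, hctX i⟩
            exact congrArg Subtype.val h1
          have hσinj : Function.Injective σ :=
            fun i j hij => hctinj (congrArg Subtype.val
              (e2.symm.injective.eq_iff.1 hij : (⟨ct i, hctX i⟩ : {v // v ∈ X}) = ⟨ct j, hctX j⟩) )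
          -- crossing property
          have hcross : ∀ i j z, z ∈ (pt i).support → z ∈ (qt j).support →
              z = ct i ∧ z = dt j := by
            intro i j z hz1 hz2
            by_cases h1 : z = ct i <;> by_cases h2 : z = dt j
            · exact ⟨h1, h2⟩
            · exact absurd (hqtmeet j z hz2 (h1 ▸ hctX i)) h2
            · exact absurd (hptmeet i z hz1 (h2 ▸ hdtX j)) h1
            · exfalso
              have hcond := hGdle (((pt i).takeUntil z hz1).append ((qt j).dropUntil z hz2))
              obtain ⟨s, hsX, hss⟩ := hsepX (haA i) (hbB j)
                ((((pt i).takeUntil z hz1).append ((qt j).dropUntil z hz2)).transfer G hcond)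
              rw [Walk.support_transfer, Walk.mem_support_append_iff] at hss
              rcases hss with hs1 | hs2
              · have heq : s = ct i := hptmeet i s (Walk.support_takeUntil_subset _ _ hs1) hsX
                exact end_not_mem_takeUntil (hptpath i) hz1 h1 (heq ▸ hs1)
              · have heq : s = dt j := hqtmeet j s (Walk.support_dropUntil_subset _ _ hs2) hsX
                exact start_not_mem_dropUntil (hqtpath j) hz2 h2 (heq ▸ hs2)
          -- glue
          refine ⟨a, fun i => b (σ i),
            fun i => ((pt i).append ((qt (σ i)).copy (hσ i) rfl)).transfer G (hGdle _),
            haA, fun i => hbB _, ?_, ?_⟩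
          · intro i
            rw [Walk.isPath_def, Walk.support_transfer, Walk.support_append, Walk.support_copy,
              List.nodup_append]
            refine ⟨(hptpath i).support_nodup, ((hqtpath (σ i)).support_nodup).tail, ?_⟩
            rintro z hz1 _ hz2 rfl
            have hz2' : z ∈ (qt (σ i)).support := List.mem_of_mem_tail hz2
            obtain ⟨hzc, hzd⟩ := hcross i (σ i) z hz1 hz2'
            have hhead := (qt (σ i)).support_eq_cons
            have hnd := (hqtpath (σ i)).support_nodup
            rw [hhead, List.nodup_cons] at hnd
            exact hnd.1 (hzd ▸ hz2)
          · intro i j hij z hz1 hz2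
            rw [Walk.support_transfer, Walk.mem_support_append_iff, Walk.support_copy] at hz1 hz2
            rcases hz1 with hz1 | hz1 <;> rcases hz2 with hz2 | hz2
            · exact (hpd i j hij) (hptsub i z hz1) (hptsub j z hz2)
            · obtain ⟨hzc, hzd⟩ := hcross i (σ j) z hz1 hz2
              exact hij (hctinj (hzc.symm.trans (hzd.trans (hσ j))))
            · obtain ⟨hzc, hzd⟩ := hcross j (σ i) z hz2 hz1
              exact hij (hctinj (hzc.symm.trans (hzd.trans (hσ i)))).symm
            · exact (hqd (σ i) (σ j) (fun hh => hij (hσinj hh)))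
                (hqtsub (σ i) z hz1) (hqtsub (σ j) z hz2)

theorem menger (G : SimpleGraph V) (A B : Finset V) (k : ℕ)
    (h : ∀ S : Finset V, Sep G A B S → k ≤ S.card) : Linkage G A B k :=
  menger_aux _ G rfl A B k h

end Menger

/-- A walk in an induced subgraph gives a walk in the ambient graph staying in the set. -/
lemma induce_walk_to_walk {G : SimpleGraph V} {Z : Set V} :
    ∀ {u v : {z // z ∈ Z}} (wi : (G.induce Z).Walk u v),
      ∃ w : G.Walk u.1 v.1, ∀ z ∈ w.support, z ∈ Z := by
  intro u v wi
  induction wi with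
  | nil => exact ⟨Walk.nil, by simpa using u.2⟩
  | @cons u c v h rest ih =>
    obtain ⟨w, hw⟩ := ih
    refine ⟨Walk.cons h w, ?_⟩
    intro z hz
    change z ∈ u.1 :: w.support at hz; rw [List.mem_cons] at hz
    rcases hz with rfl | hz
    · exact u.2
    · exact hw z hz

end MengerAux

/-- `(T, bag)` is a tree decomposition of `G`. -/
def IsTreeDecomp {V : Type*} {n : ℕ} (G : SimpleGraph V) (T : SimpleGraph (Fin n))
    (bag : Fin n → Finset V) : Prop :=
  T.Connected ∧ T.IsAcyclic ∧
  (∀ v : V, ∃ b, v ∈ bag b) ∧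
  (∀ u v : V, G.Adj u v → ∃ b, u ∈ bag b ∧ v ∈ bag b) ∧
  (∀ v : V, (T.induce {b | v ∈ bag b}).Connected)

/-- The treewidth of a finite graph: the least `w` admitting a tree decomposition
with all bags of size at most `w + 1`. -/
noncomputable def treewidth {V : Type*} (G : SimpleGraph V) : ℕ :=
  sInf {w | ∃ (n : ℕ) (T : SimpleGraph (Fin n)) (bag : Fin n → Finset V),
    IsTreeDecomp G T bag ∧ ∀ b, (bag b).card ≤ w + 1}

/-- `Q` is well-linked in `G`: any two equal-sized disjoint subsets `A, B ⊆ Q` are joined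
by `|A|` pairwise vertex-disjoint paths matching `A` to `B`. -/
def WellLinked {V : Type*} (G : SimpleGraph V) (Q : Finset V) : Prop :=
  ∀ A B : Finset V, A ⊆ Q → B ⊆ Q → Disjoint A B → A.card = B.card →
    ∃ (g : A → B) (p : (a : A) → G.Walk a.1 (g a).1),
      Function.Bijective g ∧ (∀ a, (p a).IsPath) ∧
      ∀ a a' : A, a ≠ a' → List.Disjoint (p a).support (p a').support

/-- `𝒳` is a bramble of `G`: a family of connected subgraphs that pairwise touch. -/
def IsBramble {V : Type*} (G : SimpleGraph V) (𝒳 : Set (Set V)) : Prop :=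
  (∀ X ∈ 𝒳, (G.induce X).Connected) ∧
  ∀ X ∈ 𝒳, ∀ Y ∈ 𝒳, (X ∩ Y).Nonempty ∨ ∃ x ∈ X, ∃ y ∈ Y, G.Adj x y

/-- `Q` is a hitting set of the bramble `𝒳`. -/
def Hits {V : Type*} (Q : Finset V) (𝒳 : Set (Set V)) : Prop :=
  ∀ X ∈ 𝒳, ∃ v ∈ Q, v ∈ X

/-- The order of a bramble: the minimum size of a hitting set. -/
noncomputable def brambleOrder {V : Type*} (𝒳 : Set (Set V)) : ℕ :=
  sInf {n | ∃ Q : Finset V, Hits Q 𝒳 ∧ Q.card = n}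

/-- If `𝒳` is a bramble of `G` of maximum order `tw(G)+1` and `Q` is a minimum-size
hitting set of `𝒳`, then `Q` is well-linked. -/
theorem min_hitting_set_of_max_bramble_wellLinked {V : Type*} [Fintype V]
    (G : SimpleGraph V) (𝒳 : Set (Set V)) (Q : Finset V)
    (h𝒳 : IsBramble G 𝒳)
    (hmax : ∀ 𝒴 : Set (Set V), IsBramble G 𝒴 → brambleOrder 𝒴 ≤ brambleOrder 𝒳)
    (horder : brambleOrder 𝒳 = treewidth G + 1)
    (hQ : Hits Q 𝒳)
    (hQmin : ∀ Q' : Finset V, Hits Q' 𝒳 → Q.card ≤ Q'.card) :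
    WellLinked G Q := by
  classical
  intro A B hAQ hBQ hABdisj hABcard
  -- every A–B separator has size at least |A|
  have hsep : ∀ S : Finset V, MengerAux.Sep G A B S → A.card ≤ S.card := by
    intro S hS
    by_contra hlt
    push_neg at hlt
    have hor : Hits ((Q \ A) ∪ S) 𝒳 ∨ Hits ((Q \ B) ∪ S) 𝒳 := by
      by_contra hno
      push_neg at hno
      obtain ⟨h1, h2⟩ := hno
      unfold Hits at h1 h2
      push_neg at h1 h2
      obtain ⟨X, hX𝒳, hX⟩ := h1
      obtain ⟨Y, hY𝒳, hY⟩ := h2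
      -- X meets A, avoids S; Y meets B, avoids S
      obtain ⟨vX, hvXQ, hvXX⟩ := hQ X hX𝒳
      obtain ⟨vY, hvYQ, hvYY⟩ := hQ Y hY𝒳
      have hvXA : vX ∈ A := by
        by_contra hvXA
        exact hX vX (Finset.mem_union_left _ (Finset.mem_sdiff.2 ⟨hvXQ, hvXA⟩)) hvXX
      have hvYB : vY ∈ B := by
        by_contra hvYB
        exact hY vY (Finset.mem_union_left _ (Finset.mem_sdiff.2 ⟨hvYQ, hvYB⟩)) hvYY
      have hXS : ∀ s ∈ S, s ∉ X := fun s hs => hX s (Finset.mem_union_right _ hs)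
      have hYS : ∀ s ∈ S, s ∉ Y := fun s hs => hY s (Finset.mem_union_right _ hs)
      -- build an A–B walk inside X ∪ Y, contradicting the separator S
      have hwalk : ∃ w : G.Walk vX vY, ∀ z ∈ w.support, z ∈ X ∨ z ∈ Y := by
        rcases h𝒳.2 X hX𝒳 Y hY𝒳 with ⟨u, huX, huY⟩ | ⟨u, huX, v, hvY, huv⟩
        · obtain ⟨w1i⟩ := ((h𝒳.1 X hX𝒳).preconnected ⟨vX, hvXX⟩ ⟨u, huX⟩)
          obtain ⟨w1, hw1⟩ := MengerAux.induce_walk_to_walk w1i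
          obtain ⟨w2i⟩ := ((h𝒳.1 Y hY𝒳).preconnected ⟨u, huY⟩ ⟨vY, hvYY⟩)
          obtain ⟨w2, hw2⟩ := MengerAux.induce_walk_to_walk w2i
          refine ⟨w1.append w2, ?_⟩
          intro z hz
          rw [SimpleGraph.Walk.mem_support_append_iff] at hz
          rcases hz with hz | hz
          · exact Or.inl (hw1 z hz)
          · exact Or.inr (hw2 z hz)
        · obtain ⟨w1i⟩ := ((h𝒳.1 X hX𝒳).preconnected ⟨vX, hvXX⟩ ⟨u, huX⟩)
          obtain ⟨w1, hw1⟩ := MengerAux.induce_walk_to_walk w1i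
          obtain ⟨w2i⟩ := ((h𝒳.1 Y hY𝒳).preconnected ⟨v, hvY⟩ ⟨vY, hvYY⟩)
          obtain ⟨w2, hw2⟩ := MengerAux.induce_walk_to_walk w2i
          refine ⟨w1.append (SimpleGraph.Walk.cons huv w2), ?_⟩
          intro z hz
          rw [SimpleGraph.Walk.mem_support_append_iff] at hz
          rcases hz with hz | hz
          · exact Or.inl (hw1 z hz)
          · simp only [SimpleGraph.Walk.support_cons, List.mem_cons] at hz
            rcases hz with rfl | hz
            · exact Or.inl huX
            · exact Or.inr (hw2 z hz)
      obtain ⟨w, hw⟩ := hwalk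
      obtain ⟨s, hsS, hss⟩ := hS hvXA hvYB w
      rcases hw s hss with hsX | hsY
      · exact hXS s hsS hsX
      · exact hYS s hsS hsY
    have hAle : A.card ≤ Q.card := Finset.card_le_card hAQ
    have hBle : B.card ≤ Q.card := Finset.card_le_card hBQ
    rcases hor with h | h
    · have hc := hQmin _ h
      have h1 : ((Q \ A) ∪ S).card ≤ (Q \ A).card + S.card := Finset.card_union_le _ _
      have h2 : (Q \ A).card = Q.card - A.card := Finset.card_sdiff_of_subset hAQ
      omega
    · have hc := hQmin _ h
      have h1 : ((Q \ B) ∪ S).card ≤ (Q \ B).card + S.card := Finset.card_union_le _ _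
      have h2 : (Q \ B).card = Q.card - B.card := Finset.card_sdiff_of_subset hBQ
      omega
  obtain ⟨a, b, p, haA, hbB, hppath, hpdisj⟩ := MengerAux.menger G A B A.card hsep
  have hainj : Function.Injective a := by
    intro i j hij
    by_contra hne
    exact hpdisj i j hne ((p i).start_mem_support)
      (@Eq.subst V (· ∈ (p j).support) _ _ hij.symm ((p j).start_mem_support))
  have hbinj : Function.Injective b := by
    intro i j hij
    by_contra hne
    exact hpdisj i j hne ((p i).end_mem_support)
      (@Eq.subst V (· ∈ (p j).support) _ _ hij.symm ((p j).end_mem_support))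
  have hcardA : Fintype.card (Fin A.card) = Fintype.card {v // v ∈ A} := by
    rw [Fintype.card_fin, Fintype.card_coe]
  have hbijA : Function.Bijective (fun i => (⟨a i, haA i⟩ : {v // v ∈ A})) :=
    (Fintype.bijective_iff_injective_and_card _).2
      ⟨fun i j hij => hainj (congrArg Subtype.val hij), hcardA⟩
  set eA := Equiv.ofBijective _ hbijA with heA
  have hval : ∀ v : {v // v ∈ A}, a (eA.symm v) = v.1 := by
    intro v
    exact congrArg Subtype.val (eA.apply_symm_apply v)
  refine ⟨fun v => ⟨b (eA.symm v), hbB _⟩,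
    fun v => (p (eA.symm v)).copy (hval v) rfl, ?_, ?_, ?_⟩
  · refine (Fintype.bijective_iff_injective_and_card _).2 ⟨?_, ?_⟩
    · intro v v' hvv
      have h1 : b (eA.symm v) = b (eA.symm v') := congrArg Subtype.val hvv
      exact eA.symm.injective.eq_iff.1 (hbinj h1) ▸ rfl
    · rw [Fintype.card_coe, Fintype.card_coe, hABcard]
  · intro v
    rw [SimpleGraph.Walk.isPath_def, SimpleGraph.Walk.support_copy]
    exact (hppath _).support_nodup
  · intro v v' hvv z hz1 hz2
    rw [SimpleGraph.Walk.support_copy] at hz1 hz2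
    exact hpdisj (eA.symm v) (eA.symm v') (fun hh => hvv (eA.symm.injective hh)) hz1 hz2
end

section
/- Let G be the intersection graph of a family Γ of curves grounded on a simple closed curve C, with maximum crossing-level r, and suppose G has arboricity α. For i ≥ 4α, let Γ_i denote the set of strings crossing the boundary R_i of the component of the crossing-level-≥-i region containing a fixed point p of crossing-level r. Then 2|Γ_i| ≤ |Γ_{i−4α}|. -/
open Set

/-- Points of the plane. -/
abbrev Pt := ℝ × ℝ

/-- `C` is a Jordan curve: the injective continuous image of a circle. -/
def IsJordanCurve (C : Set Pt) : Prop :=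
  ∃ g : Metric.sphere (0 : Pt) 1 → Pt, Continuous g ∧ Function.Injective g ∧ range g = C

/-- The interior region of a closed curve `C`: points whose connected component in the
complement of `C` is bounded. -/
def interiorRegion (C : Set Pt) : Set Pt :=
  {p | p ∉ C ∧ Bornology.IsBounded (connectedComponentIn Cᶜ p)}

/-- The crossing-level of a point `p` with respect to a family `f` of curves grounded on
`C`: the minimum, over curves `π` from `p` to `C`, of the number of members of the family
met by `π` at a point other than `p` itself. -/
noncomputable def crossingLevel {ι : Type*} (C : Set Pt)
    (f : ι → ContinuousMap unitInterval Pt) (p : Pt) : ℕ :=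
  sInf {n | ∃ π : ContinuousMap unitInterval Pt, π 0 = p ∧ π 1 ∈ C ∧
    n = {i : ι | ((range π ∩ range (f i)) \ {p}).Nonempty}.ncard}

/-- `G` has arboricity at most `k`: its edge set can be partitioned into `k` forests. -/
def ArboricityLE {ι : Type*} (G : SimpleGraph ι) (k : ℕ) : Prop :=
  ∃ F : Fin k → SimpleGraph ι,
    (∀ i, F i ≤ G) ∧ (∀ i, (F i).IsAcyclic) ∧
    ∀ u v : ι, G.Adj u v → ∃! i, (F i).Adj u v

/-- The set `U_i` of points of the interior region of crossing-level at least `i`. -/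
def levelSet {ι : Type*} (C : Set Pt) (f : ι → ContinuousMap unitInterval Pt) (i : ℕ) :
    Set Pt :=
  {q ∈ interiorRegion C | i ≤ crossingLevel C f q}

/-- `R_i`: the boundary of the connected component of `U_i` containing `p₀`. -/
def ringBoundary {ι : Type*} (C : Set Pt) (f : ι → ContinuousMap unitInterval Pt)
    (p₀ : Pt) (i : ℕ) : Set Pt :=
  frontier (connectedComponentIn (levelSet C f i) p₀)

/-- `Γ_i`: the set of strings intersecting `R_i`. -/
def crossingStrings {ι : Type*} (C : Set Pt) (f : ι → ContinuousMap unitInterval Pt)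
    (p₀ : Pt) (i : ℕ) : Set ι :=
  {j | (range (f j) ∩ ringBoundary C f p₀ i).Nonempty}



set_option linter.unusedSectionVars false
set_option maxHeartbeats 1000000

section
variable {ι : Type*} [Fintype ι] {C : Set Pt} {f : ι → ContinuousMap unitInterval Pt}

lemma achiev_nonempty (hC : C.Nonempty) (p : Pt) :
    {n | ∃ π : ContinuousMap unitInterval Pt, π 0 = p ∧ π 1 ∈ C ∧
      n = {i : ι | ((range π ∩ range (f i)) \ {p}).Nonempty}.ncard}.Nonempty := by
  obtain ⟨c, hc⟩ := hC
  refine ⟨_, ⟨⟨fun t => (1 - (t:ℝ)) • p + (t:ℝ) • c, by fun_prop⟩, by simp, by simpa using hc, rfl⟩⟩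

lemma crossingLevel_le (p : Pt) (π : ContinuousMap unitInterval Pt) (h0 : π 0 = p)
    (h1 : π 1 ∈ C) :
    crossingLevel C f p ≤ {i : ι | ((range π ∩ range (f i)) \ {p}).Nonempty}.ncard :=
  Nat.sInf_le ⟨π, h0, h1, rfl⟩

lemma crossingLevel_le' (p : Pt) (π : ContinuousMap unitInterval Pt) (h0 : π 0 = p)
    (h1 : π 1 ∈ C) :
    crossingLevel C f p ≤ {i : ι | (range π ∩ range (f i)).Nonempty}.ncard :=
  (crossingLevel_le p π h0 h1).trans (Set.ncard_le_ncard
    (fun k hk => hk.mono diff_subset) (Set.toFinite _))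

lemma crossingLevel_spec (hC : C.Nonempty) (p : Pt) :
    ∃ π : ContinuousMap unitInterval Pt, π 0 = p ∧ π 1 ∈ C ∧
      crossingLevel C f p = {i : ι | ((range π ∩ range (f i)) \ {p}).Nonempty}.ncard :=
  Nat.sInf_mem (achiev_nonempty hC p)

lemma crossingLevel_of_mem (p : Pt) (hp : p ∈ C) : crossingLevel C f p = 0 := by
  refine Nat.le_zero.mp ?_
  have h := crossingLevel_le (f := f) p (ContinuousMap.const _ p) rfl (by simpa using hp)
  convert h using 2
  rw [eq_comm, Set.ncard_eq_zero (Set.toFinite _)]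
  ext k
  simp only [mem_setOf_eq, mem_empty_iff_false, iff_false]
  rintro ⟨y, ⟨hy1, _⟩, hy2⟩
  obtain ⟨t, ht⟩ := hy1
  exact hy2 (by simp [← ht])

/-- Subadditivity of crossing level along a curve. -/
lemma crossingLevel_le_add (hC : C.Nonempty) {p q : Pt} (σ : ContinuousMap unitInterval Pt)
    (h0 : σ 0 = p) (h1 : σ 1 = q) :
    crossingLevel C f p ≤ {k : ι | (range σ ∩ range (f k)).Nonempty}.ncard
      + crossingLevel C f q := by
  obtain ⟨π, hπ0, hπ1, hπn⟩ := crossingLevel_spec (f := f) hC q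
  set P : Path p (π 1) := (Path.mk σ h0 h1).trans (Path.mk π hπ0 rfl) with hP
  have hle := crossingLevel_le (f := f) p P.toContinuousMap (by simp) (by simpa using hπ1)
  refine hle.trans ?_
  have hsub : {i : ι | ((range ⇑P.toContinuousMap ∩ range (f i)) \ {p}).Nonempty}
      ⊆ {k : ι | (range σ ∩ range (f k)).Nonempty}
        ∪ {i : ι | ((range π ∩ range (f i)) \ {q}).Nonempty} := by
    intro k hk
    obtain ⟨y, ⟨hyP, hyk⟩, hyp⟩ := hk
    have hyP' : y ∈ range (⇑(Path.mk σ h0 h1)) ∪ range (⇑(Path.mk π hπ0 rfl)) := by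
      rw [← Path.trans_range]
      simpa using hyP
    rcases hyP' with hy | hy
    · exact Or.inl ⟨y, hy, hyk⟩
    · by_cases hyq : y = q
      · exact Or.inl ⟨y, by simpa [hyq, ← h1] using mem_range_self (1 : unitInterval), hyk⟩
      · exact Or.inr ⟨y, ⟨hy, hyk⟩, hyq⟩
  calc {i : ι | ((range ⇑P.toContinuousMap ∩ range (f i)) \ {p}).Nonempty}.ncard
      ≤ _ := Set.ncard_le_ncard hsub (Set.toFinite _)
    _ ≤ _ := Set.ncard_union_le _ _
    _ ≤ _ := by rw [hπn]

end



section
variable {C : Set Pt}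

lemma IsJordanCurve.isClosed (hC : IsJordanCurve C) : IsClosed C := by
  obtain ⟨g, hgc, -, hgr⟩ := hC
  rw [← hgr]
  exact (isCompact_range hgc).isClosed

lemma IsJordanCurve.nonempty (hC : IsJordanCurve C) : C.Nonempty := by
  obtain ⟨g, -, -, hgr⟩ := hC
  rw [← hgr]
  exact range_nonempty_iff_nonempty.mpr ⟨⟨(1,0), by simp [Prod.norm_def]⟩⟩

lemma interiorRegion_disjoint_C : ∀ p ∈ interiorRegion C, p ∉ C := fun _ hp => hp.1

lemma isOpen_interiorRegion (hC : IsJordanCurve C) : IsOpen (interiorRegion C) := by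
  rw [isOpen_iff_forall_mem_open]
  intro p hp
  refine ⟨connectedComponentIn Cᶜ p, ?_, (isOpen_compl_iff.mpr hC.isClosed).connectedComponentIn,
    mem_connectedComponentIn hp.1⟩
  intro q hq
  have hq' : q ∉ C := (connectedComponentIn_subset _ _) hq
  have heq : connectedComponentIn Cᶜ p = connectedComponentIn Cᶜ q := connectedComponentIn_eq hq
  exact ⟨hq', heq ▸ hp.2⟩

lemma closure_interiorRegion_subset (hC : IsJordanCurve C) :
    closure (interiorRegion C) ⊆ interiorRegion C ∪ C := by
  intro z hz
  by_cases hzC : z ∈ C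
  · exact Or.inr hzC
  left
  have hzo : IsOpen (connectedComponentIn Cᶜ z) :=
    (isOpen_compl_iff.mpr hC.isClosed).connectedComponentIn
  have hzmem : z ∈ connectedComponentIn Cᶜ z := mem_connectedComponentIn hzC
  obtain ⟨q, hq1, hq2⟩ := mem_closure_iff.mp hz _ hzo hzmem
  have heq : connectedComponentIn Cᶜ z = connectedComponentIn Cᶜ q := connectedComponentIn_eq hq1
  exact ⟨hzC, by rw [heq]; exact hq2.2⟩

/-- A connected set which meets the closure of `K ⊆ interiorRegion C` and contains
a point of `C` must meet the frontier of `K`. -/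
lemma meets_frontier_of_meets_closure (hC : IsJordanCurve C) {K S : Set Pt}
    (hK : K ⊆ interiorRegion C) (hS : IsPreconnected S)
    (hmeet : (S ∩ closure K).Nonempty) (hg : ∃ c ∈ S, c ∈ C) :
    (S ∩ frontier K).Nonempty := by
  by_contra h
  rw [not_nonempty_iff_eq_empty] at h
  have hcover : S ⊆ interior K ∪ (closure K)ᶜ := by
    intro y hy
    by_cases hyc : y ∈ closure K
    · left
      have : y ∉ frontier K := fun hf => (eq_empty_iff_forall_notMem.mp h y) ⟨hy, hf⟩
      rw [frontier, mem_diff] at this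
      push_neg at this
      exact this hyc
    · exact Or.inr hyc
  obtain ⟨c, hcS, hcC⟩ := hg
  have hcK : c ∉ interior K := fun hint =>
    (interiorRegion_disjoint_C c (hK (interior_subset hint))) hcC
  have hcB : c ∈ (closure K)ᶜ := by
    intro hcc
    rcases hcover hcS with h1 | h1
    · exact hcK h1
    · exact h1 hcc
  obtain ⟨ya, hya⟩ := hmeet
  have hyaA : ya ∈ interior K := by
    rcases hcover hya.1 with h1 | h1
    · exact h1
    · exact absurd hya.2 h1
  have := hS _ _ isOpen_interior (isOpen_compl_iff.mpr isClosed_closure) hcover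
    ⟨ya, hya.1, hyaA⟩ ⟨c, hcS, hcB⟩
  obtain ⟨w, -, hw1, hw2⟩ := this
  exact hw2 (subset_closure (interior_subset hw1))

end


section forest
open SimpleGraph
variable {V : Type*} [Fintype V] [DecidableEq V]

lemma forest_edge_bound (H : SimpleGraph V) [DecidableRel H.Adj] (hH : H.IsAcyclic)
    (S : Finset V) :
    (H.edgeFinset.filter (fun e => ∀ v ∈ e, v ∈ S)).card ≤ S.card := by
  classical
  set rt : V → V := fun v => (H.connectedComponentMk v).out with hrt
  have hreach : ∀ v, H.Reachable v (rt v) := by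
    intro v
    have h1 : H.connectedComponentMk ((H.connectedComponentMk v).out) =
        H.connectedComponentMk v := (H.connectedComponentMk v).out_eq
    exact (SimpleGraph.ConnectedComponent.eq.mp h1).symm
  set fw : ∀ v, H.Walk v (rt v) := fun v => ((hreach v).some.toPath : H.Path v (rt v)).1
    with hfwdef
  have hfwp : ∀ v, (fw v).IsPath := fun v => ((hreach v).some.toPath).2
  set g : V → Sym2 V := fun v => ((fw v).edges.head?).getD s(v, v) with hg
  have key : ∀ a b (hab : H.Adj a b), (fw b).length ≤ (fw a).length → g a = s(a, b) := by
    intro a b hab hlen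
    have hrab : rt a = rt b :=
      congrArg Quot.out (SimpleGraph.ConnectedComponent.eq.mpr hab.reachable)
    have hnot : a ∉ (fw b).support := by
      intro hmem
      have hdrop : ((fw b).dropUntil a hmem).IsPath := (hfwp b).dropUntil hmem
      have hcopy : (((fw b).dropUntil a hmem).copy rfl hrab.symm).IsPath := by
        rwa [SimpleGraph.Walk.isPath_copy]
      have huniq := hH.path_unique ⟨fw a, hfwp a⟩
        ⟨((fw b).dropUntil a hmem).copy rfl hrab.symm, hcopy⟩
      have hlen2 : (fw a).length = ((fw b).dropUntil a hmem).length := by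
        have h2 := congrArg (fun p : H.Path a (rt a) => p.1.length) huniq
        simpa using h2
      have hsplit := congrArg SimpleGraph.Walk.length ((fw b).take_spec hmem)
      rw [SimpleGraph.Walk.length_append] at hsplit
      have htak : ((fw b).takeUntil a hmem).length ≠ 0 := by
        intro h0
        exact hab.ne' (SimpleGraph.Walk.eq_of_length_eq_zero h0)
      omega
    have hcons : (SimpleGraph.Walk.cons hab (fw b)).IsPath :=
      (SimpleGraph.Walk.cons_isPath_iff _ _).mpr ⟨hfwp b, hnot⟩
    have hc2 : ((SimpleGraph.Walk.cons hab (fw b)).copy rfl hrab.symm).IsPath := by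
      rwa [SimpleGraph.Walk.isPath_copy]
    have huniq := hH.path_unique ⟨fw a, hfwp a⟩
      ⟨(SimpleGraph.Walk.cons hab (fw b)).copy rfl hrab.symm, hc2⟩
    have heq : fw a = (SimpleGraph.Walk.cons hab (fw b)).copy rfl hrab.symm :=
      congrArg Subtype.val huniq
    rw [hg]
    show ((fw a).edges.head?).getD s(a, a) = s(a, b)
    rw [heq, SimpleGraph.Walk.edges_copy, SimpleGraph.Walk.edges_cons]
    rfl
  have hsubset : H.edgeFinset.filter (fun e => ∀ v ∈ e, v ∈ S) ⊆ S.image g := by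
    intro e he
    rw [Finset.mem_filter] at he
    obtain ⟨heE, hes⟩ := he
    rw [SimpleGraph.mem_edgeFinset] at heE
    induction e using Sym2.ind with
    | _ a b =>
      have hab : H.Adj a b := heE
      have haS : a ∈ S := hes a (by simp)
      have hbS : b ∈ S := hes b (by simp)
      rcases le_or_gt (fw b).length (fw a).length with h | h
      · exact Finset.mem_image.mpr ⟨a, haS, key a b hab h⟩
      · refine Finset.mem_image.mpr ⟨b, hbS, ?_⟩
        rw [key b a hab.symm h.le]
        exact Sym2.eq_swap.symm
  calc (H.edgeFinset.filter (fun e => ∀ v ∈ e, v ∈ S)).card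
      ≤ (S.image g).card := Finset.card_le_card hsubset
    _ ≤ S.card := Finset.card_image_le

lemma edges_in_bound (G : SimpleGraph V) [DecidableRel G.Adj] (α : ℕ)
    (harb : ArboricityLE G α) (S : Finset V) :
    (G.edgeFinset.filter (fun e => ∀ v ∈ e, v ∈ S)).card ≤ α * S.card := by
  classical
  obtain ⟨F, hFle, hFac, hFuniq⟩ := harb
  have hsub : G.edgeFinset.filter (fun e => ∀ v ∈ e, v ∈ S) ⊆
      Finset.univ.biUnion
        (fun l : Fin α => (F l).edgeFinset.filter (fun e => ∀ v ∈ e, v ∈ S)) := by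
    intro e he
    rw [Finset.mem_filter] at he
    obtain ⟨heE, hes⟩ := he
    rw [SimpleGraph.mem_edgeFinset] at heE
    induction e using Sym2.ind with
    | _ a b =>
      obtain ⟨l, hl, -⟩ := hFuniq a b heE
      refine Finset.mem_biUnion.mpr ⟨l, Finset.mem_univ _, ?_⟩
      rw [Finset.mem_filter, SimpleGraph.mem_edgeFinset]
      exact ⟨hl, hes⟩
  calc (G.edgeFinset.filter (fun e => ∀ v ∈ e, v ∈ S)).card
      ≤ _ := Finset.card_le_card hsub
    _ ≤ ∑ l : Fin α, ((F l).edgeFinset.filter (fun e => ∀ v ∈ e, v ∈ S)).card :=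
        Finset.card_biUnion_le
    _ ≤ ∑ _l : Fin α, S.card :=
        Finset.sum_le_sum fun l _ => forest_edge_bound (F l) (hFac l) S
    _ = α * S.card := by simp [Finset.sum_const, mul_comm]

end forest


section count
variable {ι : Type*} [Fintype ι] [DecidableEq ι]

lemma double_count (G : SimpleGraph ι) [DecidableRel G.Adj] (α : ℕ) (hα : 0 < α)
    (harb : ArboricityLE G α) (X Vf : Finset ι) (hXV : X ⊆ Vf)
    (Q : ι → Finset ι)
    (hQcard : ∀ j ∈ X, 4 * α ≤ (Q j).card + 1)
    (hQmem : ∀ j ∈ X, ∀ k ∈ Q j, k ≠ j ∧ G.Adj j k ∧ k ∈ Vf) :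
    2 * X.card ≤ Vf.card := by
  classical
  set EX := G.edgeFinset.filter (fun e => ∀ v ∈ e, v ∈ X) with hEX
  set EV := G.edgeFinset.filter (fun e => ∀ v ∈ e, v ∈ Vf) with hEV
  have hEXV : EX ⊆ EV := by
    intro e he
    rw [hEX, Finset.mem_filter] at he
    rw [hEV, Finset.mem_filter]
    exact ⟨he.1, fun v hv => hXV (he.2 v hv)⟩
  have hEXb : EX.card ≤ α * X.card := edges_in_bound G α harb X
  have hEVb : EV.card ≤ α * Vf.card := edges_in_bound G α harb Vf
  set P : Finset (ι × ι) := X.biUnion (fun j => (Q j).image (fun k => (j, k))) with hP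
  have hPcard : P.card = ∑ j ∈ X, (Q j).card := by
    rw [hP, Finset.card_biUnion]
    · refine Finset.sum_congr rfl fun j _ => ?_
      exact Finset.card_image_of_injOn (fun a _ b _ h => ((Prod.mk.injEq _ _ _ _).mp h).2)
    · intro a _ b _ hab
      simp only [Finset.disjoint_left, Finset.mem_image]
      rintro p ⟨k, _, rfl⟩ ⟨k', _, hk'⟩
      exact hab ((Prod.mk.injEq _ _ _ _).mp hk').1.symm
  have hPmem : ∀ p ∈ P, p.1 ∈ X ∧ p.2 ∈ Q p.1 := by
    intro p hp
    rw [hP, Finset.mem_biUnion] at hp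
    obtain ⟨j, hj, hp⟩ := hp
    rw [Finset.mem_image] at hp
    obtain ⟨k, hk, rfl⟩ := hp
    exact ⟨hj, hk⟩
  set P1 := P.filter (fun p => p.2 ∈ X) with hP1
  set P2 := P.filter (fun p => p.2 ∉ X) with hP2
  have hsplit : P1.card + P2.card = P.card :=
    Finset.card_filter_add_card_filter_not _
  have hP1card : P1.card ≤ 2 * EX.card := by
    have hmaps : ∀ p ∈ P1, s(p.1, p.2) ∈ EX := by
      intro p hp
      rw [hP1, Finset.mem_filter] at hp
      obtain ⟨hpP, hp2⟩ := hp
      obtain ⟨hp1, hpQ⟩ := hPmem p hpP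
      obtain ⟨-, hadj, -⟩ := hQmem _ hp1 _ hpQ
      rw [hEX, Finset.mem_filter, SimpleGraph.mem_edgeFinset, SimpleGraph.mem_edgeSet]
      refine ⟨hadj, ?_⟩
      intro v hv
      rcases Sym2.mem_iff.mp hv with h | h
      · rw [h]; exact hp1
      · rw [h]; exact hp2
    refine Finset.card_le_mul_card_image_of_maps_to hmaps 2 ?_
    intro e he
    induction e using Sym2.ind with
    | _ a b =>
      have hsub : (P1.filter (fun p => s(p.1, p.2) = s(a, b))) ⊆ {(a, b), (b, a)} := by
        intro p hp
        rw [Finset.mem_filter] at hp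
        rcases Sym2.eq_iff.mp hp.2 with ⟨h1, h2⟩ | ⟨h1, h2⟩
        · simp [Finset.mem_insert, Prod.ext_iff, h1, h2]
        · simp [Finset.mem_insert, Prod.ext_iff, h1, h2]
      calc (P1.filter (fun p => s(p.1, p.2) = s(a, b))).card
          ≤ ({(a, b), (b, a)} : Finset (ι × ι)).card := Finset.card_le_card hsub
        _ ≤ 2 := (Finset.card_insert_le _ _).trans (by simp)
  have hP2card : P2.card ≤ EV.card - EX.card := by
    have hmaps : ∀ p ∈ P2, s(p.1, p.2) ∈ EV \ EX := by
      intro p hp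
      rw [hP2, Finset.mem_filter] at hp
      obtain ⟨hpP, hp2⟩ := hp
      obtain ⟨hp1, hpQ⟩ := hPmem p hpP
      obtain ⟨-, hadj, hpV⟩ := hQmem _ hp1 _ hpQ
      rw [Finset.mem_sdiff]
      constructor
      · rw [hEV, Finset.mem_filter, SimpleGraph.mem_edgeFinset, SimpleGraph.mem_edgeSet]
        refine ⟨hadj, ?_⟩
        intro v hv
        rcases Sym2.mem_iff.mp hv with h | h
        · rw [h]; exact hXV hp1
        · rw [h]; exact hpV
      · rw [hEX, Finset.mem_filter]
        rintro ⟨-, hall⟩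
        exact hp2 (hall p.2 (Sym2.mem_mk_right _ _))
    have hinj : Set.InjOn (fun p : ι × ι => s(p.1, p.2)) ↑P2 := by
      intro p hp q hq h
      have hp' := Finset.mem_coe.mp hp
      have hq' := Finset.mem_coe.mp hq
      rw [hP2, Finset.mem_filter] at hp' hq'
      have hp1 := (hPmem p hp'.1).1
      have hq2 := hq'.2
      rcases Sym2.eq_iff.mp h with ⟨h1, h2⟩ | ⟨h1, h2⟩
      · exact Prod.ext h1 h2
      · exact absurd (h1 ▸ hp1) hq2
    calc P2.card ≤ (EV \ EX).card := Finset.card_le_card_of_injOn _ hmaps hinj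
      _ = EV.card - EX.card := Finset.card_sdiff_of_subset hEXV
  have hlow : 4 * α * X.card ≤ (∑ j ∈ X, (Q j).card) + X.card := by
    calc 4 * α * X.card = ∑ _j ∈ X, 4 * α := by
          rw [Finset.sum_const, smul_eq_mul, mul_comm]
      _ ≤ ∑ j ∈ X, ((Q j).card + 1) := Finset.sum_le_sum fun j hj => hQcard j hj
      _ = (∑ j ∈ X, (Q j).card) + X.card := by
          rw [Finset.sum_add_distrib, Finset.sum_const, smul_eq_mul, mul_one]
  have hSig : (∑ j ∈ X, (Q j).card) + X.card ≤ α * X.card + α * Vf.card + X.card := by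
    have h2 : EX.card ≤ EV.card := Finset.card_le_card hEXV
    have h1 : P.card ≤ 2 * EX.card + (EV.card - EX.card) := by
      rw [← hsplit]; exact add_le_add hP1card hP2card
    rw [hPcard] at h1
    omega
  have hfin : 4 * (α * X.card) ≤ α * X.card + α * Vf.card + X.card := by
    have h4 : 4 * (α * X.card) = 4 * α * X.card := by ring
    rw [h4]
    exact le_trans hlow hSig
  by_contra hcon
  push_neg at hcon
  have hm1 : α * Vf.card + α ≤ 2 * (α * X.card) := by
    calc α * Vf.card + α = α * (Vf.card + 1) := by ring
      _ ≤ α * (2 * X.card) := Nat.mul_le_mul_left α hcon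
      _ = 2 * (α * X.card) := by ring
  have hx : X.card ≤ α * X.card := Nat.le_mul_of_pos_left _ hα
  generalize hu : α * X.card = u at hfin hx hm1
  generalize hw : α * Vf.card = w at hfin hm1
  omega

end count

section main
variable {ι : Type*} [Fintype ι]

open Filter Topology

/-- Key geometric lemma: every string of `Γ_i` has at least `i - m` strings (counted
with itself) which meet it and belong to `Γ_m`. -/
lemma key_nbrs (C : Set Pt) (hC : IsJordanCurve C) (f : ι → ContinuousMap unitInterval Pt)
    (hground : ∀ k, f k 0 ∈ C)
    (p₀ : Pt) (i m d : ℕ) (hd : d = i - m) (hmi : m ≤ i)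
    (j : ι) (hj : j ∈ crossingStrings C f p₀ i) :
    ∃ Q : Set ι, d ≤ Q.ncard ∧ ∀ k ∈ Q, (range (f k) ∩ range (f j)).Nonempty ∧
      k ∈ crossingStrings C f p₀ m := by
  classical
  have hCne := hC.nonempty
  set Li := levelSet C f i with hLi
  set Lm := levelSet C f m with hLm
  have hLsub : Li ⊆ Lm := fun q hq => ⟨hq.1, le_trans hmi hq.2⟩
  set Ki := connectedComponentIn Li p₀ with hKi
  set Km := connectedComponentIn Lm p₀ with hKm
  have hKiKm : Ki ⊆ Km := connectedComponentIn_mono p₀ hLsub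
  have hKmiR : Km ⊆ interiorRegion C := fun q hq => ((connectedComponentIn_subset _ _) hq).1
  obtain ⟨x, hxj, hxF⟩ := hj
  have hxF' : x ∈ frontier Ki := hxF
  have hxcl : x ∈ closure Ki := frontier_subset_closure hxF'
  -- choice of ε
  set g : ι → ℝ := fun k => if x ∈ range (f k) then 1 else Metric.infDist x (range (f k)) with hg
  have hgpos : ∀ k, 0 < g k := by
    intro k
    have hgk : g k = if x ∈ range (f k) then 1 else Metric.infDist x (range (f k)) := rfl
    rw [hgk]
    by_cases hk : x ∈ range (f k)
    · rw [if_pos hk]; norm_num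
    · rw [if_neg hk]
      rw [← (isCompact_range (f k).continuous).isClosed.notMem_iff_infDist_pos
        (range_nonempty _)]
      exact hk
  obtain ⟨ε, hεpos, hεle⟩ : ∃ ε > 0, ∀ k, ε ≤ g k := by
    refine ⟨Finset.univ.inf' ⟨j, Finset.mem_univ j⟩ g, ?_, ?_⟩
    · exact (Finset.lt_inf'_iff _).mpr fun k _ => hgpos k
    · exact fun k => Finset.inf'_le _ (Finset.mem_univ k)
  have hball : ∀ k (y : Pt), y ∈ range (f k) → dist y x < ε → x ∈ range (f k) := by
    intro k y hy hdy
    by_contra hxk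
    have h1 : Metric.infDist x (range (f k)) ≤ dist x y := Metric.infDist_le_dist_of_mem hy
    have h2 : ε ≤ g k := hεle k
    have hgk : g k = if x ∈ range (f k) then 1 else Metric.infDist x (range (f k)) := rfl
    rw [hgk, if_neg hxk] at h2
    rw [dist_comm] at hdy
    linarith
  -- choice of p'
  obtain ⟨p', hp'K, hp'd⟩ : ∃ p' ∈ Ki, dist x p' < ε := Metric.mem_closure_iff.mp hxcl ε hεpos
  have hp'L : p' ∈ Li := connectedComponentIn_subset _ _ hp'K
  have hp'lev : i ≤ crossingLevel C f p' := hp'L.2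
  have hp'iR : p' ∈ interiorRegion C := hp'L.1
  have hp'Km : p' ∈ Km := hKiKm hp'K
  -- the path γ = segment (p', x) followed by f j from x back to its ground point
  obtain ⟨t₀, ht₀⟩ := hxj
  set P1 : Path p' x :=
    { toFun := fun t => (1 - (t:ℝ)) • p' + (t:ℝ) • x
      continuous_toFun := by fun_prop
      source' := by norm_num
      target' := by norm_num } with hP1
  have hmemτ : ∀ s : unitInterval, (1 - (s:ℝ)) * (t₀:ℝ) ∈ unitInterval := by
    intro s
    constructor
    · exact mul_nonneg (by linarith [s.2.2]) t₀.2.1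
    · nlinarith [s.2.1, s.2.2, t₀.2.1, t₀.2.2]
  set τ : unitInterval → unitInterval := fun s => ⟨_, hmemτ s⟩ with hτ
  have hτc : Continuous τ := Continuous.subtype_mk (by fun_prop) _
  set P2 : Path x (f j 0) :=
    { toFun := fun s => f j (τ s)
      continuous_toFun := (f j).continuous.comp hτc
      source' := by
        show f j (τ 0) = x
        have hτ0 : τ 0 = t₀ := Subtype.ext (by simp [τ])
        rw [hτ0]; exact ht₀
      target' := by
        show f j (τ 1) = f j 0
        have hτ1 : τ 1 = 0 := Subtype.ext (by simp [τ])
        rw [hτ1] } with hP2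
  set γ : Path p' (f j 0) := P1.trans P2 with hγdef
  set Γ : ℝ → Pt := fun t => γ (projIcc (0:ℝ) 1 zero_le_one t) with hΓ
  have hΓc : Continuous Γ := γ.continuous.comp continuous_projIcc
  have hΓ0 : Γ 0 = p' := by rw [hΓ]; simp
  have hΓ1 : Γ 1 = f j 0 := by rw [hΓ]; simp
  have hΓmem : ∀ t : ℝ, Γ t ∈ range ⇑γ := fun t => ⟨_, rfl⟩
  have hγr : range ⇑γ = range ⇑P1 ∪ range ⇑P2 := Path.trans_range P1 P2
  have hmeetj : ∀ k, (range ⇑γ ∩ range (f k)).Nonempty →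
      (range (f k) ∩ range (f j)).Nonempty := by
    rintro k ⟨y, hyγ, hyk⟩
    rw [hγr] at hyγ
    rcases hyγ with hy | hy
    · obtain ⟨t, ht⟩ := hy
      have hyx : y - x = (1 - (t:ℝ)) • (p' - x) := by
        rw [← ht]
        show (1 - (t:ℝ)) • p' + (t:ℝ) • x - x = _
        rw [smul_sub]
        rw [sub_smul, one_smul, sub_smul, one_smul]
        abel
      have hdist : dist y x ≤ dist p' x := by
        rw [dist_eq_norm, dist_eq_norm, hyx, norm_smul]
        have h1 : ‖(1:ℝ) - t‖ ≤ 1 := by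
          rw [Real.norm_eq_abs, abs_of_nonneg (by linarith [t.2.2])]
          linarith [t.2.1]
        calc ‖(1:ℝ) - t‖ * ‖p' - x‖ ≤ 1 * ‖p' - x‖ :=
              mul_le_mul_of_nonneg_right h1 (norm_nonneg _)
          _ = ‖p' - x‖ := one_mul _
      have hlt : dist y x < ε := lt_of_le_of_lt hdist (by rwa [dist_comm] at hp'd)
      exact ⟨x, hball k y hyk hlt, t₀, ht₀⟩
    · obtain ⟨s, hs⟩ := hy
      exact ⟨y, hyk, τ s, hs⟩
  -- first hitting time of C
  set SC : Set ℝ := {t | t ∈ Icc (0:ℝ) 1 ∧ Γ t ∈ C} with hSC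
  have hSCc : IsClosed SC := isClosed_Icc.inter (hC.isClosed.preimage hΓc)
  have hSCne : SC.Nonempty := ⟨1, ⟨by norm_num, by rw [hΓ1]; exact hground j⟩⟩
  have hSCbdd : BddBelow SC := ⟨0, fun t ht => ht.1.1⟩
  set tC := sInf SC with htCdef
  have htCmem : tC ∈ SC := hSCc.csInf_mem hSCne hSCbdd
  have htC0 : 0 ≤ tC := htCmem.1.1
  have htC1 : tC ≤ 1 := htCmem.1.2
  have hnotC : ∀ t, 0 ≤ t → t < tC → Γ t ∉ C := by
    intro t ht0 htlt htC'
    exact absurd (csInf_le hSCbdd ⟨⟨ht0, le_trans htlt.le htC1⟩, htC'⟩) (not_le.mpr htlt)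
  -- the strings met up to time t
  set N : ℝ → Set ι := fun t => {k | ∃ s : ℝ, 0 ≤ s ∧ s ≤ t ∧ Γ s ∈ range (f k)} with hN
  have hNmono : ∀ {t t' : ℝ}, t ≤ t' → N t ⊆ N t' := by
    rintro t t' h k ⟨s, h1, h2, h3⟩
    exact ⟨s, h1, h2.trans h, h3⟩
  -- level bound along the walk
  have hlev : ∀ t, 0 ≤ t →
      crossingLevel C f p' ≤ (N t).ncard + crossingLevel C f (Γ t) := by
    intro t ht0
    have hσc : Continuous fun s : unitInterval => Γ (t * (s:ℝ)) := hΓc.comp (by fun_prop)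
    have h := crossingLevel_le_add (f := f) hCne
      (σ := ⟨fun s => Γ (t * (s:ℝ)), hσc⟩) (p := p') (q := Γ t)
      (by simp [hΓ0]) (by simp)
    refine h.trans (Nat.add_le_add_right (Set.ncard_le_ncard ?_ (Set.toFinite _)) _)
    rintro k ⟨y, ⟨s, hs⟩, hyk⟩
    refine ⟨t * s, mul_nonneg ht0 s.2.1, by nlinarith [s.2.1, s.2.2], ?_⟩
    rw [show Γ (t * (s:ℝ)) = y from hs]; exact hyk
  -- escape bound at the first hitting time of C
  have hesc : i ≤ (N tC).ncard := by
    have hσc : Continuous fun s : unitInterval => Γ (tC * (s:ℝ)) := hΓc.comp (by fun_prop)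
    have h := crossingLevel_le' (f := f) p' ⟨fun s => Γ (tC * (s:ℝ)), hσc⟩
      (by simp [hΓ0]) (by simpa using htCmem.2)
    refine le_trans hp'lev (h.trans ((Set.ncard_le_ncard ?_ (Set.toFinite _))))
    rintro k ⟨y, ⟨s, hs⟩, hyk⟩
    refine ⟨tC * s, mul_nonneg htC0 s.2.1, by nlinarith [s.2.1, s.2.2], ?_⟩
    rw [show Γ (tC * (s:ℝ)) = y from hs]; exact hyk
  -- membership in the interior region before time tC
  have hiR : ∀ t, 0 ≤ t → t < tC → Γ t ∈ interiorRegion C := by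
    intro t ht0 htlt
    have hA : IsPreconnected (Γ '' Icc 0 t) := isPreconnected_Icc.image Γ hΓc.continuousOn
    have hAsub : Γ '' Icc 0 t ⊆ Cᶜ := by
      rintro y ⟨s, hs, rfl⟩
      exact hnotC s hs.1 (lt_of_le_of_lt hs.2 htlt)
    have hp'A : p' ∈ Γ '' Icc 0 t := ⟨0, ⟨le_refl 0, ht0⟩, hΓ0⟩
    have hsub2 : Γ '' Icc 0 t ⊆ connectedComponentIn Cᶜ p' :=
      hA.subset_connectedComponentIn hp'A hAsub
    have hΓt : Γ t ∈ connectedComponentIn Cᶜ p' := hsub2 ⟨t, ⟨ht0, le_refl t⟩, rfl⟩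
    refine ⟨fun hc => (hAsub ⟨t, ⟨ht0, le_refl t⟩, rfl⟩) hc, ?_⟩
    have heq : connectedComponentIn Cᶜ p' = connectedComponentIn Cᶜ (Γ t) :=
      connectedComponentIn_eq hΓt
    rw [← heq]
    exact hp'iR.2
  -- choice of the stopping time T
  obtain ⟨T, hT0, hTle, hTsmall, hTcard⟩ :
      ∃ T, 0 ≤ T ∧ T ≤ tC ∧ (∀ t, 0 ≤ t → t < T → (N t).ncard ≤ d) ∧ d ≤ (N T).ncard := by
    by_cases hcase : (N tC).ncard ≤ d
    · refine ⟨tC, htC0, le_refl _, fun t ht0 htlt =>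
        le_trans (Set.ncard_le_ncard (hNmono htlt.le) (Set.toFinite _)) hcase, ?_⟩
      omega
    · push_neg at hcase
      set B : Set ℝ := {t | 0 ≤ t ∧ d + 1 ≤ (N t).ncard} with hB
      have hBne : B.Nonempty := ⟨tC, htC0, hcase⟩
      have hBbdd : BddBelow B := ⟨0, fun t ht => ht.1⟩
      set T := sInf B with hT
      have hT0 : 0 ≤ T := le_csInf hBne fun t ht => ht.1
      have hTtC : T ≤ tC := csInf_le hBbdd ⟨htC0, hcase⟩
      have hTsmall : ∀ t, 0 ≤ t → t < T → (N t).ncard ≤ d := by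
        intro t ht0 htlt
        by_contra hcon
        push_neg at hcon
        exact absurd (csInf_le hBbdd ⟨ht0, hcon⟩) (not_le.mpr htlt)
      have hTcard : d + 1 ≤ (N T).ncard := by
        set S : Set ℕ := {n | ∃ δ : ℝ, 0 < δ ∧ n = (N (T + δ)).ncard} with hS
        have hSne : S.Nonempty := ⟨_, 1, one_pos, rfl⟩
        obtain ⟨δ₀, hδ₀pos, hδ₀⟩ := Nat.sInf_mem hSne
        have hstab : ∀ δ, 0 < δ → δ ≤ δ₀ → N (T + δ) = N (T + δ₀) := by
          intro δ h1 h2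
          refine Set.eq_of_subset_of_ncard_le (hNmono (by linarith)) ?_ (Set.toFinite _)
          rw [← hδ₀]
          exact Nat.sInf_le ⟨δ, h1, rfl⟩
        have hd1 : d + 1 ≤ (N (T + δ₀)).ncard := by
          obtain ⟨t, htB, htlt⟩ : ∃ t ∈ B, t < T + δ₀ := by
            by_contra hcon
            push_neg at hcon
            have : T + δ₀ ≤ T := le_csInf hBne hcon
            linarith
          calc d + 1 ≤ (N t).ncard := htB.2
            _ ≤ (N (T + δ₀)).ncard := Set.ncard_le_ncard (hNmono htlt.le) (Set.toFinite _)
        have hsub : N (T + δ₀) ⊆ N T := by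
          intro k hk
          have hkn : ∀ n : ℕ, ∃ s, 0 ≤ s ∧ s ≤ T + min δ₀ (1/(n+1)) ∧ Γ s ∈ range (f k) := by
            intro n
            have hδn : (0:ℝ) < min δ₀ (1/(n+1)) := lt_min hδ₀pos (by positivity)
            have hkmem : k ∈ N (T + min δ₀ (1/(n+1))) := by
              rw [hstab _ hδn (min_le_left _ _)]
              exact hk
            exact hkmem
          choose sq hs0 hsle hsmem using hkn
          have hsbdd : ∀ n, sq n ∈ Icc (0:ℝ) (T + δ₀) := fun n =>
            ⟨hs0 n, le_trans (hsle n) (by simp [min_le_left])⟩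
          obtain ⟨a, ha, φ, hφ, hconv⟩ := (isCompact_Icc).tendsto_subseq hsbdd
          have hlim : Filter.Tendsto (fun n => T + min δ₀ (1/((φ n : ℝ)+1))) Filter.atTop (nhds T) := by
            have h0 : Filter.Tendsto (fun n : ℕ => (1:ℝ)/((n:ℝ)+1)) Filter.atTop (nhds 0) :=
              tendsto_one_div_add_atTop_nhds_zero_nat
            have h1 : Filter.Tendsto (fun n : ℕ => (1:ℝ)/((φ n : ℝ)+1)) Filter.atTop (nhds 0) :=
              h0.comp hφ.tendsto_atTop
            have h2 : Filter.Tendsto (fun n : ℕ => min δ₀ ((1:ℝ)/((φ n : ℝ)+1))) Filter.atTop (nhds 0) := by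
              have := Filter.Tendsto.min (tendsto_const_nhds (x := δ₀)) h1
              rw [min_eq_right hδ₀pos.le] at this
              exact this
            have h3 := Filter.Tendsto.const_add T h2
            rw [add_zero] at h3
            exact h3
          have haT : a ≤ T := by
            refine le_of_tendsto_of_tendsto hconv hlim ?_
            filter_upwards with n
            exact hsle (φ n)
          have hmem2 : Γ a ∈ range (f k) := by
            have h2 : Filter.Tendsto (fun n => Γ (sq (φ n))) Filter.atTop (nhds (Γ a)) :=
              (hΓc.tendsto a).comp hconv
            exact ((isCompact_range (f k).continuous).isClosed).mem_of_tendsto h2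
              (Filter.Eventually.of_forall fun n => hsmem (φ n))
          exact ⟨a, ha.1, haT, hmem2⟩
        calc d + 1 ≤ (N (T + δ₀)).ncard := hd1
          _ ≤ (N T).ncard := Set.ncard_le_ncard hsub (Set.toFinite _)
      exact ⟨T, hT0, hTtC, hTsmall, le_trans (Nat.le_succ d) hTcard⟩
  -- the initial piece of the walk lies in K_m
  have hALm : ∀ t, 0 ≤ t → t < T → Γ t ∈ Lm := by
    intro t ht0 htlt
    have h1 : Γ t ∈ interiorRegion C := hiR t ht0 (lt_of_lt_of_le htlt hTle)
    have h2 := hlev t ht0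
    have h3 : (N t).ncard ≤ d := hTsmall t ht0 htlt
    refine ⟨h1, ?_⟩
    have h4 := le_trans hp'lev h2
    omega
  have hAKm : Γ '' Ico 0 T ⊆ Km := by
    rcases eq_or_lt_of_le hT0 with h | h
    · rintro y ⟨s, hs, rfl⟩
      rw [← h] at hs
      exact absurd hs.2 (not_lt.mpr hs.1)
    · have hpc : IsPreconnected (Γ '' Ico 0 T) := isPreconnected_Ico.image Γ hΓc.continuousOn
      have hsub : Γ '' Ico 0 T ⊆ Lm := by
        rintro y ⟨s, hs, rfl⟩
        exact hALm s hs.1 hs.2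
      have hp'mem : p' ∈ Γ '' Ico 0 T := ⟨0, ⟨le_refl _, h⟩, hΓ0⟩
      have hKmeq : connectedComponentIn Lm p₀ = connectedComponentIn Lm p' :=
        connectedComponentIn_eq hp'Km
      have := hpc.subset_connectedComponentIn hp'mem hsub
      rw [hKm, hKmeq]
      exact this
  have hΓTcl : Γ T ∈ closure Km := by
    rcases eq_or_lt_of_le hT0 with h | h
    · rw [← h, hΓ0]
      exact subset_closure hp'Km
    · have hTclos : T ∈ closure (Ico (0:ℝ) T) := by
        rw [closure_Ico h.ne]
        exact ⟨hT0, le_refl _⟩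
      have hne2 : (nhdsWithin T (Ico (0:ℝ) T)).NeBot :=
        mem_closure_iff_nhdsWithin_neBot.mp hTclos
      have htd : Filter.Tendsto Γ (nhdsWithin T (Ico (0:ℝ) T)) (nhds (Γ T)) :=
        (hΓc.tendsto T).mono_left nhdsWithin_le_nhds
      have hev : ∀ᶠ s in nhdsWithin T (Ico (0:ℝ) T), Γ s ∈ Km :=
        eventually_nhdsWithin_of_forall fun s hs => hAKm ⟨s, hs, rfl⟩
      exact mem_closure_of_tendsto htd hev
  -- conclusion
  refine ⟨N T, hTcard, fun k hk => ⟨?_, ?_⟩⟩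
  · obtain ⟨s, h1, h2, h3⟩ := hk
    exact hmeetj k ⟨Γ s, hΓmem s, h3⟩
  · obtain ⟨s, hs0, hsT, hsmem⟩ := hk
    have hclose : (range (f k) ∩ closure Km).Nonempty := by
      rcases lt_or_eq_of_le hsT with h | h
      · exact ⟨Γ s, hsmem, subset_closure (hAKm ⟨s, ⟨hs0, h⟩, rfl⟩)⟩
      · exact ⟨Γ s, hsmem, h ▸ hΓTcl⟩
    obtain ⟨y, hy1, hy2⟩ := meets_frontier_of_meets_closure hC (K := Km) (S := range (f k))
      hKmiR (isConnected_range (f k).continuous).isPreconnected hclose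
      ⟨f k 0, mem_range_self _, hground k⟩
    exact ⟨y, hy1, hy2⟩


end main

/-- If `G` is the intersection graph of a family of strings grounded on a Jordan curve
`C`, `G` has arboricity at most `α`, and `p₀` is an interior point attaining the maximum
crossing-level `r`, then for every `i ≥ 4α` we have `2|Γ_i| ≤ |Γ_{i−4α}|`. -/
theorem crossingStrings_halving {ι : Type*} [Fintype ι]
    (C : Set Pt) (hC : IsJordanCurve C)
    (f : ι → ContinuousMap unitInterval Pt)
    (hground : ∀ i, f i 0 ∈ C)
    (hin : ∀ i, range (f i) ⊆ closure (interiorRegion C))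
    (G : SimpleGraph ι)
    (hG : ∀ i j, G.Adj i j ↔ i ≠ j ∧ (range (f i) ∩ range (f j)).Nonempty)
    (α : ℕ) (hα : 0 < α) (harb : ArboricityLE G α)
    (r : ℕ) (p₀ : Pt) (hp₀ : p₀ ∈ interiorRegion C)
    (hlevel : crossingLevel C f p₀ = r)
    (hmaxlevel : ∀ q ∈ interiorRegion C, crossingLevel C f q ≤ r)
    (i : ℕ) (hi : 4 * α ≤ i) :
    2 * (crossingStrings C f p₀ i).ncard ≤ (crossingStrings C f p₀ (i - 4 * α)).ncard := by
  classical
  set m := i - 4 * α with hm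
  have hmi : m ≤ i := by omega
  have hd : 4 * α = i - m := by omega
  have hmono : crossingStrings C f p₀ i ⊆ crossingStrings C f p₀ m := by
    intro j hj
    obtain ⟨x, hxj, hxF⟩ := hj
    have hxF' : x ∈ frontier (connectedComponentIn (levelSet C f i) p₀) := hxF
    have hsub : connectedComponentIn (levelSet C f i) p₀ ⊆
        connectedComponentIn (levelSet C f m) p₀ :=
      connectedComponentIn_mono p₀ (fun q hq => ⟨hq.1, le_trans hmi hq.2⟩)
    have hcl : x ∈ closure (connectedComponentIn (levelSet C f m) p₀) :=
      closure_mono hsub (frontier_subset_closure hxF')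
    have hKmiR : connectedComponentIn (levelSet C f m) p₀ ⊆ interiorRegion C :=
      fun q hq => ((connectedComponentIn_subset _ _) hq).1
    obtain ⟨y, hy1, hy2⟩ := meets_frontier_of_meets_closure hC hKmiR
      (isConnected_range (f j).continuous).isPreconnected ⟨x, hxj, hcl⟩
      ⟨f j 0, mem_range_self _, hground j⟩
    exact ⟨y, hy1, hy2⟩
  have hkey : ∀ j : ι, ∃ Qf : Finset ι, j ∈ crossingStrings C f p₀ i →
      (4 * α ≤ Qf.card + 1 ∧ ∀ k ∈ Qf, k ≠ j ∧ G.Adj j k ∧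
        k ∈ (crossingStrings C f p₀ m).toFinset) := by
    intro j
    by_cases hj : j ∈ crossingStrings C f p₀ i
    · obtain ⟨Q, hQcard, hQmem⟩ := key_nbrs C hC f hground p₀ i m (4 * α) hd hmi j hj
      refine ⟨Q.toFinset.erase j, fun _ => ⟨?_, ?_⟩⟩
      · have h1 : Q.toFinset.card = Q.ncard := (Set.ncard_eq_toFinset_card' Q).symm
        have h2 : Q.toFinset.card ≤ (Q.toFinset.erase j).card + 1 := by
          by_cases hjQ : j ∈ Q.toFinset
          · rw [Finset.card_erase_add_one hjQ]
          · rw [Finset.erase_eq_of_notMem hjQ]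
            omega
        omega
      · intro k hk
        rw [Finset.mem_erase] at hk
        obtain ⟨hkj, hkQ⟩ := hk
        rw [Set.mem_toFinset] at hkQ
        obtain ⟨hmeet, hmem⟩ := hQmem k hkQ
        refine ⟨hkj, ?_, Set.mem_toFinset.mpr hmem⟩
        rw [hG j k]
        refine ⟨hkj.symm, ?_⟩
        obtain ⟨y, h1, h2⟩ := hmeet
        exact ⟨y, h2, h1⟩
    · exact ⟨∅, fun h => absurd h hj⟩
  choose Qf hQf using hkey
  have hcount := double_count G α hα harb (crossingStrings C f p₀ i).toFinset
    (crossingStrings C f p₀ m).toFinset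
    (fun j hj => Set.mem_toFinset.mpr (hmono (Set.mem_toFinset.mp hj))) Qf
    (fun j hj => ((hQf j) (Set.mem_toFinset.mp hj)).1)
    (fun j hj => ((hQf j) (Set.mem_toFinset.mp hj)).2)
  rw [Set.ncard_eq_toFinset_card' (crossingStrings C f p₀ i),
    Set.ncard_eq_toFinset_card' (crossingStrings C f p₀ m)]
  exact hcount
end

section
/- For every n = 2^m there exists a graph G on Θ(n) vertices of constant arboricity (every subgraph has at most C·|V| edges for an absolute constant C) whose treewidth is at least m − 1 = log₂ n − 1; in particular G contains a clique minor of size m. -/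
/-- `G` has a clique minor of size `m`: a `K_m`-minor model with connected, pairwise
disjoint branch sets, any two joined by an edge. -/
def HasCliqueMinor {V : Type*} (G : SimpleGraph V) (m : ℕ) : Prop :=
  ∃ B : Fin m → Set V,
    (∀ i, (G.induce (B i)).Connected) ∧
    (Pairwise fun i j => Disjoint (B i) (B j)) ∧
    ∀ i j, i ≠ j → ∃ u ∈ B i, ∃ v ∈ B j, G.Adj u v

open SimpleGraph

variable {α : Type*} [DecidableEq α] {T : SimpleGraph α}

/-- A set is convex if it contains every path between its points. -/
def TreeConv (T : SimpleGraph α) (A : Set α) : Prop :=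
  ∀ ⦃a c : α⦄, a ∈ A → c ∈ A → ∀ w : T.Walk a c, w.IsPath → ∀ x ∈ w.support, x ∈ A

lemma treeConv_of_induce_connected (hac : T.IsAcyclic) {A : Set α}
    (hA : (T.induce A).Connected) : TreeConv T A := by
  intro a c ha hc w hw x hx
  obtain ⟨w'⟩ := hA ⟨a, ha⟩ ⟨c, hc⟩
  set w2 : T.Walk a c := w'.map (SimpleGraph.Embedding.induce A).toHom with hw2
  have hsup : ∀ y ∈ w2.support, y ∈ A := by
    intro y hy
    replace hy : y ∈ (w'.map (SimpleGraph.Embedding.induce A).toHom).support := hy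
    rw [SimpleGraph.Walk.support_map, List.mem_map] at hy
    obtain ⟨z, _, rfl⟩ := hy
    exact z.2
  have huniq := hac.path_unique ⟨w, hw⟩ w2.toPath
  have : x ∈ (w2.toPath : T.Walk a c).support := by
    rw [← huniq]; exact hx
  exact hsup x (w2.support_toPath_subset this)

lemma median_aux :
    ∀ {x y : α} (p : T.Walk x y) {z : α} (q : T.Walk z y), p.IsPath → q.IsPath →
    ∃ (w : α) (r : T.Walk x z), r.IsPath ∧ w ∈ p.support ∧ w ∈ q.support ∧
      w ∈ r.support ∧ ∀ t ∈ r.support, t ∈ p.support ∨ t ∈ q.support := by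
  have base : ∀ {x y z : α} (p : T.Walk x y) (q : T.Walk z y), q.IsPath →
      (hx : x ∈ q.support) →
      ∃ (w : α) (r : T.Walk x z), r.IsPath ∧ w ∈ p.support ∧ w ∈ q.support ∧
        w ∈ r.support ∧ ∀ t ∈ r.support, t ∈ p.support ∨ t ∈ q.support := by
    intro x y z p q hq hx
    refine ⟨x, (q.takeUntil x hx).reverse, ((hq.takeUntil hx).reverse), p.start_mem_support,
      hx, ?_, ?_⟩
    · simp [SimpleGraph.Walk.support_reverse]
    · intro t ht
      rw [SimpleGraph.Walk.support_reverse, List.mem_reverse] at ht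
      exact Or.inr (q.support_takeUntil_subset hx ht)
  intro x y p
  induction p with
  | nil => intro z q hp hq; exact base _ q hq (q.end_mem_support)
  | @cons x x' y h p' ih =>
    intro z q hp hq
    by_cases hx : x ∈ q.support
    · exact base _ q hq hx
    · have hp' : p'.IsPath := hp.of_cons
      have hxp' : x ∉ p'.support := (SimpleGraph.Walk.cons_isPath_iff _ _ |>.1 hp).2
      obtain ⟨w, r', hr', hwp', hwq, hwr', hsub⟩ := ih q hp' hq
      refine ⟨w, SimpleGraph.Walk.cons h r', ?_, ?_, hwq, ?_, ?_⟩
      · rw [SimpleGraph.Walk.cons_isPath_iff]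
        refine ⟨hr', fun hxr => ?_⟩
        rcases hsub x hxr with h1 | h1
        · exact hxp' h1
        · exact hx h1
      · rw [SimpleGraph.Walk.support_cons]; exact List.mem_cons_of_mem _ hwp'
      · rw [SimpleGraph.Walk.support_cons]; exact List.mem_cons_of_mem _ hwr'
      · intro t ht
        rw [SimpleGraph.Walk.support_cons] at ht
        rcases List.mem_cons.1 ht with rfl | ht
        · exact Or.inl (SimpleGraph.Walk.start_mem_support _)
        · rcases hsub t ht with h1 | h1
          · exact Or.inl (by rw [SimpleGraph.Walk.support_cons]; exact List.mem_cons_of_mem _ h1)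
          · exact Or.inr h1

lemma helly3 (hc : T.Connected) {A B C : Set α} (hA : TreeConv T A) (hB : TreeConv T B)
    (hC : TreeConv T C) {x y z : α} (hxA : x ∈ A) (hxB : x ∈ B) (hyB : y ∈ B) (hyC : y ∈ C)
    (hzA : z ∈ A) (hzC : z ∈ C) : ∃ w, w ∈ A ∧ w ∈ B ∧ w ∈ C := by
  obtain ⟨wxy⟩ := hc x y
  obtain ⟨wzy⟩ := hc z y
  obtain ⟨w, r, hr, hwp, hwq, hwr, -⟩ :=
    median_aux (wxy.toPath : T.Walk x y) (wzy.toPath : T.Walk z y)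
      wxy.toPath.2 wzy.toPath.2
  exact ⟨w, hA hxA hzA r hr w hwr, hB hxB hyB _ wxy.toPath.2 w hwp,
    hC hzC hyC _ wzy.toPath.2 w hwq⟩

lemma helly (hc : T.Connected) :
    ∀ (k : ℕ) (S : Fin (k + 1) → Set α), (∀ i, TreeConv T (S i)) →
      (∀ i j, (S i ∩ S j).Nonempty) → (⋂ i, S i).Nonempty := by
  intro k
  induction k with
  | zero =>
    intro S _ hne
    obtain ⟨x, hx, -⟩ := hne 0 0
    refine ⟨x, Set.mem_iInter.2 fun i => ?_⟩
    have hi : i = 0 := by omega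
    rwa [hi]
  | succ k ih =>
    intro S hconv hne
    set S' : Fin (k + 1) → Set α := fun i => S i.castSucc ∩ S (Fin.last (k + 1)) with hS'
    have hconv' : ∀ i, TreeConv T (S' i) := by
      intro i a c ha hc' w hw t ht
      exact ⟨hconv _ ha.1 hc'.1 w hw t ht, hconv _ ha.2 hc'.2 w hw t ht⟩
    have hne' : ∀ i j, (S' i ∩ S' j).Nonempty := by
      intro i j
      obtain ⟨x, hx1, hx2⟩ := hne i.castSucc j.castSucc
      obtain ⟨y, hy1, hy2⟩ := hne j.castSucc (Fin.last (k + 1))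
      obtain ⟨z, hz1, hz2⟩ := hne i.castSucc (Fin.last (k + 1))
      obtain ⟨w, hwA, hwB, hwC⟩ := helly3 hc (hconv i.castSucc) (hconv j.castSucc)
        (hconv (Fin.last (k + 1))) hx1 hx2 hy1 hy2 hz1 hz2
      exact ⟨w, ⟨hwA, hwC⟩, ⟨hwB, hwC⟩⟩
    obtain ⟨x, hx⟩ := ih S' hconv' hne'
    rw [Set.mem_iInter] at hx
    refine ⟨x, Set.mem_iInter.2 fun i => ?_⟩
    induction i using Fin.lastCases with
    | last => exact (hx 0).2
    | cast j => exact (hx j).1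

lemma subtree_lift {A A' : Set α} (h : A ⊆ A') {a b : α} (ha : a ∈ A) (hb : b ∈ A)
    (hr : (T.induce A).Reachable ⟨a, ha⟩ ⟨b, hb⟩) :
    (T.induce A').Reachable ⟨a, h ha⟩ ⟨b, h hb⟩ :=
  hr.map (T.induceHomOfLE h).toHom

lemma card_bound {V : Type*} {m n : ℕ} {G : SimpleGraph V} {T : SimpleGraph (Fin n)}
    {bag : Fin n → Finset V} (htd : IsTreeDecomp G T bag) (hcm : HasCliqueMinor G m)
    {w : ℕ} (hw : ∀ b, (bag b).card ≤ w + 1) : m ≤ w + 1 := by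
  classical
  obtain ⟨Bset, hBconn, hBdisj, hBedge⟩ := hcm
  obtain ⟨hTc, hTac, hcover, hedgebag, hbagconn⟩ := htd
  match m with
  | 0 => omega
  | (k + 1) =>
    set S : Fin (k + 1) → Set (Fin n) := fun i => {b | ∃ v ∈ Bset i, v ∈ bag b} with hS
    have hsub : ∀ (i : Fin (k + 1)) (v : V), v ∈ Bset i → {b | v ∈ bag b} ⊆ S i :=
      fun i v hv b hb => ⟨v, hv, hb⟩
    -- single-vertex subtrees reach within S i
    have hone : ∀ (i : Fin (k + 1)) (v : V) (hv : v ∈ Bset i) (b b' : Fin n)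
        (hb : v ∈ bag b) (hb' : v ∈ bag b'),
        (T.induce (S i)).Reachable ⟨b, hsub i v hv hb⟩ ⟨b', hsub i v hv hb'⟩ := by
      intro i v hv b b' hb hb'
      exact subtree_lift (hsub i v hv) hb hb' ((hbagconn v) ⟨b, hb⟩ ⟨b', hb'⟩)
    have key : ∀ (i : Fin (k + 1)) (pu pv : ↥(Bset i))
        (p : (G.induce (Bset i)).Walk pu pv) (b b' : Fin n)
        (hb : ↑pu ∈ bag b) (hb' : ↑pv ∈ bag b'),
        (T.induce (S i)).Reachable ⟨b, hsub i _ pu.2 hb⟩ ⟨b', hsub i _ pv.2 hb'⟩ := by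
      intro i pu pv p
      induction p with
      | @nil a => intro b b' hb hb'; exact hone i _ a.2 b b' hb hb'
      | @cons a c d h p ih =>
        intro b b' hb hb'
        have hadj : G.Adj ↑a ↑c := h
        obtain ⟨b0, hb0u, hb0w⟩ := hedgebag _ _ hadj
        exact (hone i _ a.2 b b0 hb hb0u).trans (ih b0 b' hb0w hb')
    have hSconn : ∀ i, (T.induce (S i)).Connected := by
      intro i
      rw [SimpleGraph.connected_iff]
      constructor
      · rintro ⟨b, hb⟩ ⟨b', hb'⟩
        obtain ⟨u, hu, hub⟩ := hb
        obtain ⟨v, hv, hvb⟩ := hb'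
        obtain ⟨p⟩ := (hBconn i) ⟨u, hu⟩ ⟨v, hv⟩
        exact key i ⟨u, hu⟩ ⟨v, hv⟩ p b b' hub hvb
      · obtain ⟨⟨v, hv⟩⟩ := (hBconn i).nonempty
        obtain ⟨b, hb⟩ := hcover v
        exact ⟨⟨b, v, hv, hb⟩⟩
    have hconv : ∀ i, TreeConv T (S i) := fun i =>
      treeConv_of_induce_connected hTac (hSconn i)
    have hne : ∀ i j, (S i ∩ S j).Nonempty := by
      intro i j
      by_cases hij : i = j
      · subst hij
        obtain ⟨⟨b, hb⟩⟩ := (hSconn i).nonempty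
        exact ⟨b, hb, hb⟩
      · obtain ⟨u, hu, v, hv, hadj⟩ := hBedge i j hij
        obtain ⟨b, hb1, hb2⟩ := hedgebag _ _ hadj
        exact ⟨b, ⟨u, hu, hb1⟩, ⟨v, hv, hb2⟩⟩
    obtain ⟨b, hb⟩ := helly hTc k S hconv hne
    rw [Set.mem_iInter] at hb
    have hpick : ∀ i : Fin (k + 1), ∃ v, v ∈ Bset i ∧ v ∈ bag b := by
      intro i; obtain ⟨v, hv, hvb⟩ := hb i; exact ⟨v, hv, hvb⟩
    choose f hf1 hf2 using hpick
    have hinj : Set.InjOn f (Finset.univ : Finset (Fin (k + 1))) := by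
      intro i _ j _ hij
      by_contra hne'
      exact (Set.disjoint_left.1 (hBdisj hne')) (hf1 i) (hij ▸ hf1 j)
    have := Finset.card_le_card_of_injOn f (fun i _ => hf2 i) hinj
    simp only [Finset.card_univ, Fintype.card_fin] at this
    exact le_trans this (hw b)

lemma trivial_decomp {N : ℕ} (G : SimpleGraph (Fin N)) :
    N ∈ {w | ∃ (n : ℕ) (T : SimpleGraph (Fin n)) (bag : Fin n → Finset (Fin N)),
      IsTreeDecomp G T bag ∧ ∀ b, (bag b).card ≤ w + 1} := by
  refine ⟨1, ⊥, fun _ => Finset.univ, ⟨?_, ?_, ?_, ?_, ?_⟩, ?_⟩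
  · rw [SimpleGraph.connected_iff]
    exact ⟨fun a b => by rw [Subsingleton.elim a b], ⟨0⟩⟩
  · intro v c hc
    cases c with
    | nil => exact hc.ne_nil rfl
    | cons h _ => exact h.elim
  · exact fun v => ⟨0, Finset.mem_univ v⟩
  · exact fun u v _ => ⟨0, Finset.mem_univ u, Finset.mem_univ v⟩
  · intro v
    rw [SimpleGraph.connected_iff]
    exact ⟨fun a b => by rw [Subsingleton.elim a b], ⟨⟨0, Finset.mem_univ v⟩⟩⟩
  · intro b
    simpa using Nat.le_succ N

lemma tw_lower {N m : ℕ} {G : SimpleGraph (Fin N)} (h : HasCliqueMinor G m) :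
    m - 1 ≤ treewidth G := by
  have hne : Set.Nonempty {w | ∃ (n : ℕ) (T : SimpleGraph (Fin n)) (bag : Fin n → Finset (Fin N)),
      IsTreeDecomp G T bag ∧ ∀ b, (bag b).card ≤ w + 1} := ⟨N, trivial_decomp G⟩
  have hmem : treewidth G ∈ {w | ∃ (n : ℕ) (T : SimpleGraph (Fin n))
      (bag : Fin n → Finset (Fin N)),
      IsTreeDecomp G T bag ∧ ∀ b, (bag b).card ≤ w + 1} := Nat.sInf_mem hne
  obtain ⟨n, T, bag, htd, hw⟩ := hmem
  have := card_bound htd h hw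
  omega

/-! ### The construction: a subdivided clique, padded to `2^m + m*m + m` vertices. -/

lemma mm_le (m : ℕ) : m * m + m ≤ 2 * 2 ^ m := by
  induction m with
  | zero => simp
  | succ m ih =>
    have h2 : m + 1 ≤ 2 ^ m := Nat.lt_two_pow_self (n := m)
    have hp : 2 ^ (m + 1) = 2 * 2 ^ m := by ring
    have hexp : (m + 1) * (m + 1) = m * m + 2 * m + 1 := by ring
    omega

lemma sub_lt_N {m i j : ℕ} (hij : i < j) (hjm : j < m) :
    m + i + m * j < 2 ^ m + m * m + m := by
  have h1 : m * (j + 1) ≤ m * m := Nat.mul_le_mul_left m (by omega)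
  have h2 : m * (j + 1) = m * j + m := by ring
  have h3 : 1 ≤ 2 ^ m := Nat.one_le_two_pow
  omega

lemma decode_mod {m i j : ℕ} (him : i < m) : (m + i + m * j - m) % m = i := by
  have h : m + i + m * j - m = i + m * j := by omega
  rw [h, Nat.add_mul_mod_self_left, Nat.mod_eq_of_lt him]

lemma decode_div {m i j : ℕ} (him : i < m) : (m + i + m * j - m) / m = j := by
  have h : m + i + m * j - m = i + m * j := by omega
  rw [h, Nat.add_mul_div_left _ _ (by omega : 0 < m), Nat.div_eq_of_lt him, Nat.zero_add]

lemma sub_inj {m i j i' j' : ℕ} (hi : i < m) (hi' : i' < m)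
    (h : m + i + m * j = m + i' + m * j') : i = i' ∧ j = j' := by
  constructor
  · have e1 := decode_mod (j := j) hi
    rw [h] at e1
    have e2 := decode_mod (j := j') hi'
    omega
  · have e1 := decode_div (j := j) hi
    rw [h] at e1
    have e2 := decode_div (j := j') hi'
    omega

/-- The subdivided clique on `m` branch vertices, padded to `2^m + m*m + m` vertices.
Vertex `i < m` is the `i`-th branch vertex; vertex `m + i + m*j` (for `i < j < m`) is
the subdivision vertex of the edge `{i, j}`. -/
def cg (m : ℕ) : SimpleGraph (Fin (2 ^ m + m * m + m)) where
  Adj u v := u ≠ v ∧ ∃ i j : ℕ, i < j ∧ j < m ∧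
      ((((u : ℕ) = i ∨ (u : ℕ) = j) ∧ (v : ℕ) = m + i + m * j) ∨
       (((v : ℕ) = i ∨ (v : ℕ) = j) ∧ (u : ℕ) = m + i + m * j))
  symm := by
    constructor
    rintro u v ⟨hne, i, j, h1, h2, h3⟩
    exact ⟨hne.symm, i, j, h1, h2, h3.symm⟩
  loopless := ⟨fun u h => h.1 rfl⟩

/-- Branch set of the minor model: branch vertex `i` together with the subdivision
vertices of the edges `{i, j}` with `i < j`. -/
def bset (m : ℕ) (i : Fin m) : Set (Fin (2 ^ m + m * m + m)) :=
  {v | (v : ℕ) = (i : ℕ) ∨ ∃ j : ℕ, (i : ℕ) < j ∧ j < m ∧ (v : ℕ) = m + (i : ℕ) + m * j}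

lemma cg_minor (m : ℕ) : HasCliqueMinor (cg m) m := by
  refine ⟨bset m, ?_, ?_, ?_⟩
  · -- connectivity of each branch set
    intro i
    have him : (i : ℕ) < 2 ^ m + m * m + m := by
      have h3 : 1 ≤ 2 ^ m := Nat.one_le_two_pow
      have := i.2
      nlinarith [Nat.zero_le (m * m)]
    set c : Fin (2 ^ m + m * m + m) := ⟨(i : ℕ), him⟩ with hc
    have hcmem : c ∈ bset m i := Or.inl rfl
    have hreach : ∀ v (hv : v ∈ bset m i),
        ((cg m).induce (bset m i)).Reachable ⟨v, hv⟩ ⟨c, hcmem⟩ := by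
      intro v hv
      rcases hv with h | ⟨j, hij, hjm, hvs⟩
      · have : v = c := Fin.ext (by simp [hc, h])
        subst this; rfl
      · have hadj : ((cg m).induce (bset m i)).Adj ⟨v, Or.inr ⟨j, hij, hjm, hvs⟩⟩ ⟨c, hcmem⟩ := by
          dsimp only [cg]
          refine ⟨?_, (i : ℕ), j, hij, hjm, Or.inr ⟨Or.inl rfl, hvs⟩⟩
          intro hvc
          have hvc' : v = c := by simpa using hvc
          have hv2 := hvs
          rw [hvc'] at hv2
          have hci : (c : ℕ) = (i : ℕ) := rfl
          omega
        exact hadj.reachable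
    rw [SimpleGraph.connected_iff]
    exact ⟨fun a b => (hreach a a.2).trans (hreach b b.2).symm, ⟨⟨c, hcmem⟩⟩⟩
  · -- disjointness
    intro i j hij
    rw [Set.disjoint_left]
    rintro v (h1 | ⟨a, hia, ham, h1⟩) (h2 | ⟨b, hjb, hbm, h2⟩)
    · exact hij (Fin.ext (by omega))
    · have : (i : ℕ) < m := i.2
      have : (j : ℕ) < m := j.2
      have : m * b ≥ 0 := Nat.zero_le _
      omega
    · have : (i : ℕ) < m := i.2
      have : m * a ≥ 0 := Nat.zero_le _
      omega
    · have := (sub_inj (lt_trans hia ham) (lt_trans hjb hbm) (h1.symm.trans h2)).1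
      exact hij (Fin.ext (by omega))
  · -- edges between branch sets
    intro i j hij
    have hvne : (i : ℕ) ≠ (j : ℕ) := fun h => hij (Fin.ext h)
    rcases Nat.lt_or_ge (i : ℕ) (j : ℕ) with hlt | hge
    · refine ⟨⟨m + (i : ℕ) + m * (j : ℕ), sub_lt_N hlt j.2⟩,
        Or.inr ⟨(j : ℕ), hlt, j.2, rfl⟩,
        ⟨(j : ℕ), by
          have h3 : 1 ≤ 2 ^ m := Nat.one_le_two_pow
          have := j.2
          nlinarith [Nat.zero_le (m * m)]⟩, Or.inl rfl, ?_⟩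
      dsimp only [cg]
      refine ⟨?_, (i : ℕ), (j : ℕ), hlt, j.2, Or.inr ⟨Or.inr rfl, rfl⟩⟩
      intro h
      have := congrArg (Fin.val) h
      simp only at this
      have : m * (j : ℕ) ≥ 0 := Nat.zero_le _
      have := j.2
      omega
    · have hlt : (j : ℕ) < (i : ℕ) := by omega
      refine ⟨⟨(i : ℕ), by
          have h3 : 1 ≤ 2 ^ m := Nat.one_le_two_pow
          have := i.2
          nlinarith [Nat.zero_le (m * m)]⟩, Or.inl rfl,
        ⟨m + (j : ℕ) + m * (i : ℕ), sub_lt_N hlt i.2⟩,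
        Or.inr ⟨(i : ℕ), hlt, i.2, rfl⟩, ?_⟩
      dsimp only [cg]
      refine ⟨?_, (j : ℕ), (i : ℕ), hlt, i.2, Or.inl ⟨Or.inr rfl, rfl⟩⟩
      intro h
      have := congrArg (Fin.val) h
      simp only at this
      have : m * (i : ℕ) ≥ 0 := Nat.zero_le _
      have := i.2
      omega

/-! ### Sparsity -/

def minE {β : Type*} [LinearOrder β] : Sym2 β → β := Sym2.lift ⟨min, min_comm⟩
def maxE {β : Type*} [LinearOrder β] : Sym2 β → β := Sym2.lift ⟨max, max_comm⟩

lemma minE_mk {β : Type*} [LinearOrder β] (a b : β) : minE s(a, b) = min a b := rfl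
lemma maxE_mk {β : Type*} [LinearOrder β] (a b : β) : maxE s(a, b) = max a b := rfl

lemma mk_minE_maxE {β : Type*} [LinearOrder β] (e : Sym2 β) : s(minE e, maxE e) = e := by
  induction e using Sym2.ind with
  | _ a b =>
    rcases le_total a b with h | h
    · rw [minE_mk, maxE_mk, min_eq_left h, max_eq_right h]
    · rw [minE_mk, maxE_mk, min_eq_right h, max_eq_left h, Sym2.eq_swap]

lemma maxE_mem {β : Type*} [LinearOrder β] (e : Sym2 β) : maxE e ∈ e := by
  induction e using Sym2.ind with
  | _ a b =>
    rcases le_total a b with h | h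
    · rw [maxE_mk, max_eq_right h]; exact Sym2.mem_mk_right a b
    · rw [maxE_mk, max_eq_left h]; exact Sym2.mem_mk_left a b

lemma edge_struct {m : ℕ} {e : Sym2 (Fin (2 ^ m + m * m + m))} (he : e ∈ (cg m).edgeSet) :
    ∃ i j : ℕ, i < j ∧ j < m ∧ ((minE e).val = i ∨ (minE e).val = j) ∧
      (maxE e).val = m + i + m * j := by
  induction e using Sym2.ind with
  | _ u v =>
    rw [SimpleGraph.mem_edgeSet] at he
    dsimp only [cg] at he
    obtain ⟨hne, i, j, hij, hjm, hcase⟩ := he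
    rcases hcase with ⟨hu, hv⟩ | ⟨hv, hu⟩
    · have hle : u ≤ v := by
        rw [Fin.le_def]
        have : m * j ≥ 0 := Nat.zero_le _
        omega
      refine ⟨i, j, hij, hjm, ?_, ?_⟩
      · rw [minE_mk, min_eq_left hle]; exact hu
      · rw [maxE_mk, max_eq_right hle]; exact hv
    · have hle : v ≤ u := by
        rw [Fin.le_def]
        have : m * j ≥ 0 := Nat.zero_le _
        omega
      refine ⟨i, j, hij, hjm, ?_, ?_⟩
      · rw [minE_mk, min_eq_right hle]; exact hv
      · rw [maxE_mk, max_eq_left hle]; exact hu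

lemma cg_sparse (m : ℕ) (s : Finset (Fin (2 ^ m + m * m + m))) :
    ((cg m).edgeSet ∩ {e | ∀ v ∈ e, v ∈ s}).ncard ≤ 3 * s.card := by
  classical
  set f : Sym2 (Fin (2 ^ m + m * m + m)) → Fin (2 ^ m + m * m + m) × Bool :=
    fun e => (maxE e, decide ((minE e).val = ((maxE e).val - m) % m)) with hf
  have hmaps : ∀ e ∈ (cg m).edgeSet ∩ {e | ∀ v ∈ e, v ∈ s},
      f e ∈ (↑(s ×ˢ (Finset.univ : Finset Bool)) : Set _) := by
    rintro e ⟨-, hes⟩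
    simp only [Finset.coe_product, Set.mem_prod, Finset.mem_coe]
    exact ⟨hes _ (maxE_mem e), Finset.mem_univ _⟩
  have hinj : Set.InjOn f ((cg m).edgeSet ∩ {e | ∀ v ∈ e, v ∈ s}) := by
    rintro e ⟨he, -⟩ e' ⟨he', -⟩ hfe
    obtain ⟨i, j, hij, hjm, hmin, hmax⟩ := edge_struct he
    obtain ⟨i', j', hij', hjm', hmin', hmax'⟩ := edge_struct he'
    have hpair : maxE e = maxE e' ∧
        (decide ((minE e).val = ((maxE e).val - m) % m) : Bool) =
        decide ((minE e').val = ((maxE e').val - m) % m) := by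
      exact ⟨congrArg Prod.fst hfe, congrArg Prod.snd hfe⟩
    obtain ⟨hmaxeq, hbool⟩ := hpair
    have hveq : (maxE e).val = (maxE e').val := congrArg Fin.val hmaxeq
    have hii : i = i' ∧ j = j' := by
      apply sub_inj (lt_trans hij hjm) (lt_trans hij' hjm')
      rw [← hmax, ← hmax', hveq]
    obtain ⟨rfl, rfl⟩ := hii
    have hdec : ((maxE e).val - m) % m = i := by rw [hmax]; exact decode_mod (lt_trans hij hjm)
    have hdec' : ((maxE e').val - m) % m = i := by rw [hmax']; exact decode_mod (lt_trans hij hjm)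
    have hiff : ((minE e).val = i) ↔ ((minE e').val = i) := by
      have := decide_eq_decide.mp hbool
      rw [hdec, hdec'] at this
      exact this
    have hmineq : (minE e).val = (minE e').val := by
      rcases hmin with h1 | h1
      · rw [h1, hiff.mp h1]
      · rcases hmin' with h2 | h2
        · exact absurd (hiff.mpr h2) (by omega)
        · rw [h1, h2]
    have : minE e = minE e' := Fin.ext hmineq
    rw [← mk_minE_maxE e, ← mk_minE_maxE e', this, hmaxeq]
  have hle := Set.ncard_le_ncard_of_injOn f hmaps hinj (Set.toFinite _)
  rw [Set.ncard_coe_finset, Finset.card_product, Finset.card_univ] at hle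
  simp only [Fintype.card_bool] at hle
  omega


/-- For every `n = 2^m` there is a graph on `Θ(n)` vertices of constant arboricity
(every induced subgraph has at most `C·|V|` edges, `C` an absolute constant) whose
treewidth is at least `m - 1 = log₂ n - 1`; in particular it has a clique minor of
size `m`. -/
theorem exists_sparse_graph_log_treewidth :
    ∃ C : ℕ, 0 < C ∧ ∀ m : ℕ, ∃ (N : ℕ) (G : SimpleGraph (Fin N)),
      2 ^ m ≤ C * N ∧ N ≤ C * 2 ^ m ∧
      (∀ s : Finset (Fin N), (G.edgeSet ∩ {e | ∀ v ∈ e, v ∈ s}).ncard ≤ C * s.card) ∧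
      HasCliqueMinor G m ∧ m - 1 ≤ treewidth G := by
  refine ⟨3, by norm_num, fun m => ⟨2 ^ m + m * m + m, cg m, ?_, ?_, cg_sparse m, cg_minor m,
    tw_lower (cg_minor m)⟩⟩
  · have : m * m ≥ 0 := Nat.zero_le _
    omega
  · have := mm_le m
    omega
end

section
/- Let G be a graph in which every subgraph H with girth greater than 4 (no cycles of length ≤ 4) has treewidth at most w. Then a greedy algorithm that repeatedly removes a cycle of length at most 4 and finally solves cycle packing optimally on the remaining graph yields at least OPT/4 vertex-disjoint cycles, where OPT is the maximum number of vertex-disjoint cycles in G. Formally: if C₁,…,C_s are vertex-disjoint cycles of length ≤ 4 in G such that G' = G − (V(C₁)∪…∪V(C_s)) has no cycle of length ≤ 4, and M is a maximum-size family of vertex-disjoint cycles in G', then s + |M| ≥ OPT/4. -/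
open SimpleGraph

lemma cycle_support_toFinset_card {V : Type*} [DecidableEq V] {G : SimpleGraph V} {u : V}
    {p : G.Walk u u} (hp : p.IsCycle) : p.support.toFinset.card ≤ p.length := by
  have hne : p.support.tail ≠ [] := by
    have := hp.three_le_length
    have hlen : p.support.tail.length = p.length := by
      have := p.length_support
      simp [List.length_tail, this]
    intro h; rw [h] at hlen; simp at hlen; omega
  have key : ∀ (l : List V) (h : l ≠ []), l.getLast h = u → l.tail ≠ [] → u ∈ l.tail := by
    intro l h hl ht
    match l with
    | [] => exact absurd rfl h
    | a :: t =>
      simp only [List.tail_cons] at ht ⊢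
      rw [List.getLast_cons ht] at hl
      exact hl ▸ List.getLast_mem ht
  have hmem : u ∈ p.support.tail := key p.support (by simp) p.getLast_support hne
  have hsub : p.support.toFinset = p.support.tail.toFinset := by
    conv_lhs => rw [p.support_eq_cons]
    rw [List.toFinset_cons, Finset.insert_eq_self.2 (List.mem_toFinset.2 hmem)]
  rw [hsub]
  calc p.support.tail.toFinset.card ≤ p.support.tail.length := p.support.tail.toFinset_card_le
    _ = p.length := by have := p.length_support; simp [List.length_tail, this]

/-- Greedy 4-approximation for cycle packing: if `C₁,…,C_s` are vertex-disjoint cycles of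
length at most 4 in `G` such that `G' = G − (V(C₁) ∪ … ∪ V(C_s))` has no cycle of length
at most 4, and `M` is a maximum-size family of vertex-disjoint cycles of `G'`, then
`s + |M| ≥ OPT/4`, i.e. every cycle packing of `G` has size at most `4(s + |M|)`. -/
theorem cycle_packing_greedy_four_approx {V : Type*} (G : SimpleGraph V) (s : ℕ)
    (c : Fin s → V) (w : ∀ i, G.Walk (c i) (c i))
    (hcyc : ∀ i, (w i).IsCycle) (hlen : ∀ i, (w i).length ≤ 4)
    (hdisj : ∀ i j, i ≠ j → List.Disjoint (w i).support (w j).support)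
    (D : Set V) (hD : D = ⋃ i, {v | v ∈ (w i).support})
    (hnoshort : ¬ ∃ (v : V) (u : G.Walk v v), u.IsCycle ∧ u.length ≤ 4 ∧
      ∀ x ∈ u.support, x ∉ D)
    (m : ℕ) (d : Fin m → V) (wd : ∀ i, G.Walk (d i) (d i))
    (hdcyc : ∀ i, (wd i).IsCycle)
    (hdavoid : ∀ i, ∀ x ∈ (wd i).support, x ∉ D)
    (hddisj : ∀ i j, i ≠ j → List.Disjoint (wd i).support (wd j).support)
    (hmaximum : ∀ (m' : ℕ) (d' : Fin m' → V) (wd' : ∀ i, G.Walk (d' i) (d' i)),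
      (∀ i, (wd' i).IsCycle) → (∀ i, ∀ x ∈ (wd' i).support, x ∉ D) →
      (∀ i j, i ≠ j → List.Disjoint (wd' i).support (wd' j).support) → m' ≤ m)
    (N : ℕ) (o : Fin N → V) (wo : ∀ i, G.Walk (o i) (o i))
    (hocyc : ∀ i, (wo i).IsCycle)
    (hodisj : ∀ i j, i ≠ j → List.Disjoint (wo i).support (wo j).support) :
    N ≤ 4 * (s + m) := by
  classical
  set A : Finset (Fin N) :=
    Finset.univ.filter (fun i => ∀ x ∈ (wo i).support, x ∉ D) with hA
  -- Cycles avoiding D form a packing in G', hence at most m of them.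
  have hAm : A.card ≤ m := by
    have e := A.orderIsoOfFin rfl
    refine hmaximum A.card (fun k => o (e k)) (fun k => wo (e k)) (fun k => hocyc _)
      (fun k x hx => ?_) (fun i j hij => ?_)
    · exact (Finset.mem_filter.1 (e k).2).2 x hx
    · have : (e i : Fin N) ≠ (e j : Fin N) := fun h =>
        hij (e.injective (Subtype.coe_injective h))
      exact hodisj _ _ this
  -- Cycles meeting D inject into the vertex set covered by the short cycles.
  have hBm : (Finset.univ \ A).card ≤ 4 * s := by
    set F : Finset V := Finset.univ.biUnion (fun j : Fin s => (w j).support.toFinset) with hF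
    have hFcard : F.card ≤ 4 * s := by
      calc F.card ≤ ∑ j : Fin s, (w j).support.toFinset.card := Finset.card_biUnion_le
        _ ≤ ∑ _j : Fin s, 4 := Finset.sum_le_sum (fun j _ =>
            le_trans (cycle_support_toFinset_card (hcyc j)) (hlen j))
        _ = 4 * s := by simp [mul_comm]
    have hex : ∀ i : Fin N, ∃ x, x ∈ (wo i).support ∧ (i ∉ A → x ∈ D) := by
      intro i
      by_cases hi : i ∈ A
      · exact ⟨o i, (wo i).start_mem_support, fun h => absurd hi h⟩
      · rw [hA, Finset.mem_filter] at hi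
        push_neg at hi
        obtain ⟨x, hx1, hx2⟩ := hi (Finset.mem_univ i)
        exact ⟨x, hx1, fun _ => hx2⟩
    choose f hf1 hf2 using hex
    have : (Finset.univ \ A).card ≤ F.card := by
      apply Finset.card_le_card_of_injOn f
      · intro i hi
        rw [Finset.mem_coe, Finset.mem_sdiff] at hi
        have hxD := hf2 i hi.2
        rw [hD] at hxD
        simp only [Set.mem_iUnion, Set.mem_setOf_eq] at hxD
        obtain ⟨j, hj⟩ := hxD
        rw [hF]
        exact Finset.mem_biUnion.2 ⟨j, Finset.mem_univ j, List.mem_toFinset.2 hj⟩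
      · intro i _ j _ hij
        by_contra hne
        exact hodisj i j hne (hf1 i) (hij ▸ hf1 j)
    omega
  have := Finset.card_sdiff_of_subset (Finset.subset_univ A)
  have hcu : (Finset.univ : Finset (Fin N)).card = N := Finset.card_univ.trans (Fintype.card_fin N)
  have hAle : A.card ≤ N := le_trans (Finset.card_le_card (Finset.subset_univ A)) (le_of_eq hcu)
  omega
end
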